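/- arXiv:2507.20214 — 18 statements merged into one kernel-verified Lean document; each statement's English description precedes it below -/
import Mathlib

section
/- Let a and b be Köthe matrices and let θ = (θ_n) be a complex sequence belonging to K(b) (i.e. ∑_{n=1}^∞ |θ_n| b_{n,k} < ∞ for every k). Assume the continuity condition: for every k ∈ ℕ there exist m ∈ ℕ and C > 0 such that ∑_{j=n}^∞ |θ_j| b_{j,k} ≤ C · a_{n,m} for all n ∈ ℕ. Then the Rhaly operator R_θ : K(a) → K(b) is well defined and continuous; precisely, for every k, with m and C as above, every x ∈ K(a) satisfies R_θ x ∈ K(b) and ∑_{n=1}^∞ |(R_θ x)_n| b_{n,k} ≤ C · ∑_{n=1}^∞ |x_n| a_{n,m}. -/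
open scoped BigOperators

/-- The Rhaly map: `(R_θ x)_n = (∑_{j≤n} x_j) · θ_n` (indices starting at 0). -/
noncomputable def rhaly (θ x : ℕ → ℂ) : ℕ → ℂ :=
  fun n => (∑ j ∈ Finset.range (n + 1), x j) * θ n

/-- If `θ ∈ K(b)` and the continuity condition holds with data `k, m, C`,
then for every `x ∈ K(a)` the image `R_θ x` satisfies the `k`-th seminorm estimate. -/
theorem rhaly_wellDefined_continuous
    (a b : ℕ → ℕ → ℝ)
    (ha_nonneg : ∀ n k, 0 ≤ a n k) (ha_mono : ∀ n k, a n k ≤ a n (k + 1))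
    (ha_pos : ∀ n, ∃ k, 0 < a n k)
    (hb_nonneg : ∀ n k, 0 ≤ b n k) (hb_mono : ∀ n k, b n k ≤ b n (k + 1))
    (hb_pos : ∀ n, ∃ k, 0 < b n k)
    (θ : ℕ → ℂ)
    (hθ : ∀ k, Summable fun n => ‖θ n‖ * b n k)
    (k m : ℕ) (C : ℝ) (hC : 0 < C)
    (hcond : ∀ n, (∑' j : ℕ, if n ≤ j then ‖θ j‖ * b j k else 0) ≤ C * a n m)
    (x : ℕ → ℂ) (hx : ∀ l, Summable fun n => ‖x n‖ * a n l) :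
    Summable (fun n => ‖rhaly θ x n‖ * b n k) ∧
      ∑' n, ‖rhaly θ x n‖ * b n k ≤ C * ∑' n, ‖x n‖ * a n m := by
  have hbk : ∀ n, 0 ≤ ‖θ n‖ * b n k := fun n => mul_nonneg (norm_nonneg _) (hb_nonneg n k)
  have hsum_ind : ∀ j, Summable (fun n => if j ≤ n then ‖θ n‖ * b n k else 0) := by
    intro j
    refine Summable.of_nonneg_of_le (fun n => ?_) (fun n => ?_) (hθ k)
    · split
      · exact hbk n
      · exact le_rfl
    · split
      · exact le_rfl
      · exact hbk n
  have key : ∀ N, ∑ n ∈ Finset.range N, ‖rhaly θ x n‖ * b n k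
      ≤ C * ∑' j, ‖x j‖ * a j m := by
    intro N
    have step1 : ∑ n ∈ Finset.range N, ‖rhaly θ x n‖ * b n k
        ≤ ∑ n ∈ Finset.range N, ∑ j ∈ Finset.range (n + 1), ‖x j‖ * (‖θ n‖ * b n k) := by
      refine Finset.sum_le_sum fun n _ => ?_
      rw [← Finset.sum_mul, ← mul_assoc]
      refine mul_le_mul_of_nonneg_right ?_ (hb_nonneg n k)
      rw [rhaly, norm_mul]
      exact mul_le_mul_of_nonneg_right (norm_sum_le _ _) (norm_nonneg _)
    have swap : ∑ n ∈ Finset.range N, ∑ j ∈ Finset.range (n + 1), ‖x j‖ * (‖θ n‖ * b n k)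
        = ∑ j ∈ Finset.range N, ∑ n ∈ Finset.Ico j N, ‖x j‖ * (‖θ n‖ * b n k) := by
      simp only [Finset.range_eq_Ico]
      exact (Finset.sum_Ico_Ico_comm 0 N fun i j => ‖x i‖ * (‖θ j‖ * b j k)).symm
    have step2 : ∑ j ∈ Finset.range N, ∑ n ∈ Finset.Ico j N, ‖x j‖ * (‖θ n‖ * b n k)
        ≤ ∑ j ∈ Finset.range N, ‖x j‖ * (C * a j m) := by
      refine Finset.sum_le_sum fun j _ => ?_
      rw [← Finset.mul_sum]
      refine mul_le_mul_of_nonneg_left (le_trans ?_ (hcond j)) (norm_nonneg _)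
      have : ∑ n ∈ Finset.Ico j N, ‖θ n‖ * b n k
          = ∑ n ∈ Finset.Ico j N, (if j ≤ n then ‖θ n‖ * b n k else 0) := by
        refine Finset.sum_congr rfl fun n hn => ?_
        rw [if_pos (Finset.mem_Ico.mp hn).1]
      rw [this]
      refine Summable.sum_le_tsum _ (fun n _ => ?_) (hsum_ind j)
      split
      · exact hbk _
      · exact le_rfl
    have step3 : ∑ j ∈ Finset.range N, ‖x j‖ * (C * a j m)
        ≤ C * ∑' j, ‖x j‖ * a j m := by
      have : ∑ j ∈ Finset.range N, ‖x j‖ * (C * a j m)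
          = C * ∑ j ∈ Finset.range N, ‖x j‖ * a j m := by
        rw [Finset.mul_sum]; exact Finset.sum_congr rfl fun j _ => by ring
      rw [this]
      refine mul_le_mul_of_nonneg_left ?_ hC.le
      exact Summable.sum_le_tsum _ (fun j _ => mul_nonneg (norm_nonneg _) (ha_nonneg j m)) (hx m)
    calc ∑ n ∈ Finset.range N, ‖rhaly θ x n‖ * b n k
        ≤ _ := step1
      _ = _ := swap
      _ ≤ _ := step2
      _ ≤ _ := step3
  have hnn : ∀ n, 0 ≤ ‖rhaly θ x n‖ * b n k :=
    fun n => mul_nonneg (norm_nonneg _) (hb_nonneg n k)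
  exact ⟨summable_of_sum_range_le hnn key, Summable.tsum_le_of_sum_range_le (summable_of_sum_range_le hnn key) key⟩
end

section
/- Let a and b be Köthe matrices and let θ ∈ K(b). If there exists m₀ ∈ ℕ with inf_{n∈ℕ} a_{n,m₀} > 0, then for every k ∈ ℕ there exists D_k > 0 such that ∑_{j=n}^∞ |θ_j| b_{j,k} ≤ D_k · a_{n,m₀} for all n ∈ ℕ, and consequently every x ∈ K(a) satisfies R_θ x ∈ K(b) with ∑_{n=1}^∞ |(R_θ x)_n| b_{n,k} ≤ D_k · ∑_{n=1}^∞ |x_n| a_{n,m₀}. In particular the same index m₀ works for all k (this is the Crone–Robinson criterion guaranteeing compactness of R_θ : K(a) → K(b) when K(b) is Montel). -/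
open scoped BigOperators

/-- If `θ ∈ K(b)` and `inf_n a_{n,m₀} > 0` for some `m₀`, then for every `k`
there is `D_k > 0` bounding the tails of `θ` against `a_{·,m₀}`, and consequently `R_θ`
maps `K(a)` into `K(b)` with the same index `m₀` working for all `k`. -/
theorem rhaly_compactness_criterion
    (a b : ℕ → ℕ → ℝ)
    (ha_nonneg : ∀ n k, 0 ≤ a n k) (ha_mono : ∀ n k, a n k ≤ a n (k + 1))
    (ha_pos : ∀ n, ∃ k, 0 < a n k)
    (hb_nonneg : ∀ n k, 0 ≤ b n k) (hb_mono : ∀ n k, b n k ≤ b n (k + 1))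
    (hb_pos : ∀ n, ∃ k, 0 < b n k)
    (θ : ℕ → ℂ)
    (hθ : ∀ k, Summable fun n => ‖θ n‖ * b n k)
    (m₀ : ℕ) (A : ℝ) (hA : 0 < A) (hAle : ∀ n, A ≤ a n m₀) :
    ∀ k : ℕ, ∃ D : ℝ, 0 < D ∧
      (∀ n, (∑' j : ℕ, if n ≤ j then ‖θ j‖ * b j k else 0) ≤ D * a n m₀) ∧
      ∀ x : ℕ → ℂ, (∀ l, Summable fun n => ‖x n‖ * a n l) →
        Summable (fun n => ‖rhaly θ x n‖ * b n k) ∧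
          ∑' n, ‖rhaly θ x n‖ * b n k ≤ D * ∑' n, ‖x n‖ * a n m₀ := by
  intro k
  set S := ∑' n, ‖θ n‖ * b n k with hS
  have hnn : ∀ n, 0 ≤ ‖θ n‖ * b n k := fun n => mul_nonneg (norm_nonneg _) (hb_nonneg n k)
  have hSnn : 0 ≤ S := tsum_nonneg hnn
  have hDpos : 0 < (S + 1) / A := div_pos (by linarith) hA
  have htailsum : ∀ n, Summable (fun j => if n ≤ j then ‖θ j‖ * b j k else 0) := by
    intro n
    refine Summable.of_nonneg_of_le (fun j => ?_) (fun j => ?_) (hθ k)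
    · split
      · exact hnn j
      · exact le_refl 0
    · split
      · exact le_refl _
      · exact hnn j
  have htail : ∀ n, (∑' j : ℕ, if n ≤ j then ‖θ j‖ * b j k else 0) ≤ (S + 1) / A * a n m₀ := by
    intro n
    have h1 : (∑' j : ℕ, if n ≤ j then ‖θ j‖ * b j k else 0) ≤ S := by
      refine Summable.tsum_le_tsum (fun j => ?_) (htailsum n) (hθ k)
      split
      · exact le_refl _
      · exact hnn j
    have h2 : (S + 1) / A * A ≤ (S + 1) / A * a n m₀ :=
      mul_le_mul_of_nonneg_left (hAle n) hDpos.le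
    rw [div_mul_cancel₀ _ hA.ne'] at h2
    linarith
  refine ⟨(S + 1) / A, hDpos, htail, ?_⟩
  intro x hx
  set C := ∑' n, ‖x n‖ * a n m₀ with hC
  have hxnn : ∀ j, 0 ≤ ‖x j‖ * a j m₀ := fun j => mul_nonneg (norm_nonneg _) (ha_nonneg j m₀)
  have hCnn : 0 ≤ C := tsum_nonneg hxnn
  have hpartial : ∀ n, ∑ j ∈ Finset.range (n + 1), ‖x j‖ ≤ C / A := by
    intro n
    rw [le_div_iff₀ hA]
    calc (∑ j ∈ Finset.range (n + 1), ‖x j‖) * A = ∑ j ∈ Finset.range (n + 1), ‖x j‖ * A := by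
          rw [Finset.sum_mul]
      _ ≤ ∑ j ∈ Finset.range (n + 1), ‖x j‖ * a j m₀ :=
          Finset.sum_le_sum fun j _ => mul_le_mul_of_nonneg_left (hAle j) (norm_nonneg _)
      _ ≤ C := Summable.sum_le_tsum _ (fun j _ => hxnn j) (hx m₀)
  set g : ℕ → ℝ := fun n => (∑ j ∈ Finset.range (n + 1), ‖x j‖) * (‖θ n‖ * b n k) with hg
  have hgnn : ∀ n, 0 ≤ g n := fun n =>
    mul_nonneg (Finset.sum_nonneg fun j _ => norm_nonneg _) (hnn n)
  have hgsum : Summable g := by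
    refine Summable.of_nonneg_of_le hgnn (fun n => ?_) ((hθ k).mul_left (C / A))
    exact mul_le_mul_of_nonneg_right (hpartial n) (hnn n)
  have hle : ∀ n, ‖rhaly θ x n‖ * b n k ≤ g n := by
    intro n
    have h1 : ‖rhaly θ x n‖ ≤ (∑ j ∈ Finset.range (n + 1), ‖x j‖) * ‖θ n‖ := by
      rw [rhaly, norm_mul]
      exact mul_le_mul_of_nonneg_right (norm_sum_le _ _) (norm_nonneg _)
    calc ‖rhaly θ x n‖ * b n k
        ≤ (∑ j ∈ Finset.range (n + 1), ‖x j‖) * ‖θ n‖ * b n k :=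
          mul_le_mul_of_nonneg_right h1 (hb_nonneg n k)
      _ = g n := by rw [hg, mul_assoc]
  have hrsum : Summable (fun n => ‖rhaly θ x n‖ * b n k) :=
    Summable.of_nonneg_of_le (fun n => mul_nonneg (norm_nonneg _) (hb_nonneg n k)) hle hgsum
  refine ⟨hrsum, ?_⟩
  -- double sum argument
  set F : ℕ → ℕ → ℝ := fun j n => if j ≤ n then ‖x j‖ * (‖θ n‖ * b n k) else 0 with hF
  have hFnn : ∀ j n, 0 ≤ F j n := by
    intro j n
    simp only [hF]
    split
    · exact mul_nonneg (norm_nonneg _) (hnn n)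
    · exact le_refl 0
  have hFrow : ∀ j, Summable (F j) := by
    intro j
    have : F j = fun n => ‖x j‖ * (if j ≤ n then ‖θ n‖ * b n k else 0) := by
      funext n; simp only [hF, mul_ite, mul_zero]
    rw [this]
    exact (htailsum j).mul_left _
  have hFrowsum : ∀ j, ∑' n, F j n ≤ (S + 1) / A * (‖x j‖ * a j m₀) := by
    intro j
    have heq : ∑' n, F j n = ‖x j‖ * ∑' n, (if j ≤ n then ‖θ n‖ * b n k else 0) := by
      rw [← tsum_mul_left]
      congr 1; funext n; simp only [hF, mul_ite, mul_zero]
    rw [heq]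
    calc ‖x j‖ * ∑' n, (if j ≤ n then ‖θ n‖ * b n k else 0)
        ≤ ‖x j‖ * ((S + 1) / A * a j m₀) :=
          mul_le_mul_of_nonneg_left (htail j) (norm_nonneg _)
      _ = (S + 1) / A * (‖x j‖ * a j m₀) := by ring
  have hFsumrows : Summable (fun j => ∑' n, F j n) := by
    refine Summable.of_nonneg_of_le (fun j => tsum_nonneg (hFnn j)) hFrowsum
      (((hx m₀).mul_left ((S + 1) / A)))
  have hFunc : Summable (Function.uncurry F) := by
    refine (summable_prod_of_nonneg ?_).mpr ⟨hFrow, hFsumrows⟩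
    intro p
    exact hFnn p.1 p.2
  have hFcol : ∀ n, Summable (fun j => F j n) := by
    intro n
    apply summable_of_ne_finset_zero (s := Finset.range (n + 1))
    intro j hj
    simp only [Finset.mem_range, not_lt] at hj
    simp only [hF]
    rw [if_neg (by omega)]
  have hcol : ∀ n, ∑' j, F j n = g n := by
    intro n
    rw [tsum_eq_sum (s := Finset.range (n + 1)) (f := fun j => F j n)]
    · simp only [hg, hF, Finset.sum_mul]
      refine Finset.sum_congr rfl fun j hj => ?_
      simp only [Finset.mem_range] at hj
      rw [if_pos (by omega)]
    · intro j hj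
      simp only [Finset.mem_range, not_lt] at hj
      simp only [hF]
      rw [if_neg (by omega)]
  have hswap : ∑' n, ∑' j, F j n = ∑' j, ∑' n, F j n :=
    Summable.tsum_comm' hFunc hFrow hFcol
  have hgts : ∑' n, g n ≤ (S + 1) / A * C := by
    have : ∑' n, g n = ∑' j, ∑' n, F j n := by
      rw [← hswap]
      exact tsum_congr fun n => (hcol n).symm
    rw [this]
    calc ∑' j, ∑' n, F j n ≤ ∑' j, (S + 1) / A * (‖x j‖ * a j m₀) :=
          Summable.tsum_le_tsum hFrowsum hFsumrows ((hx m₀).mul_left _)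
      _ = (S + 1) / A * C := by rw [tsum_mul_left]
  calc ∑' n, ‖rhaly θ x n‖ * b n k ≤ ∑' n, g n := Summable.tsum_le_tsum hle hrsum hgsum
    _ ≤ (S + 1) / A * C := hgts
end

section
/- Let α : ℕ → ℝ be nondecreasing with α_n ≥ 0 and α_n → ∞, let b be a Köthe matrix, and let θ ∈ K(b). Then the Rhaly operator R_θ : Λ_∞(α) → K(b) is well defined, continuous, and bounded on the unit ball of the first seminorm: for every k ∈ ℕ there exists D_k > 0 such that every x ∈ Λ_∞(α) satisfies R_θ x ∈ K(b) and ∑_{n=1}^∞ |(R_θ x)_n| b_{n,k} ≤ D_k · ∑_{n=1}^∞ |x_n| e^{α_n} (the domain seminorm index 1 serving for all k, which yields compactness when K(b) is Montel). -/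
open scoped BigOperators

/-- For `θ ∈ K(b)`, the Rhaly operator `R_θ : Λ_∞(α) → K(b)` is well defined
and continuous, the first domain seminorm `∑_n |x_n| e^{α_n}` serving for every target
seminorm index `k`. -/
theorem rhaly_powerSeriesInfinite_to_Kothe
    (α : ℕ → ℝ) (hα_mono : Monotone α) (hα_nonneg : ∀ n, 0 ≤ α n)
    (hα_top : Filter.Tendsto α Filter.atTop Filter.atTop)
    (b : ℕ → ℕ → ℝ)
    (hb_nonneg : ∀ n k, 0 ≤ b n k) (hb_mono : ∀ n k, b n k ≤ b n (k + 1))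
    (hb_pos : ∀ n, ∃ k, 0 < b n k)
    (θ : ℕ → ℂ)
    (hθ : ∀ k, Summable fun n => ‖θ n‖ * b n k) :
    ∀ k : ℕ, ∃ D : ℝ, 0 < D ∧
      ∀ x : ℕ → ℂ,
        (∀ l : ℕ, Summable fun n => ‖x n‖ * Real.exp (l * α n)) →
        Summable (fun n => ‖rhaly θ x n‖ * b n k) ∧
          ∑' n, ‖rhaly θ x n‖ * b n k ≤ D * ∑' n, ‖x n‖ * Real.exp (α n) := by
  intro k
  have hθ0 : 0 ≤ ∑' n, ‖θ n‖ * b n k :=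
    tsum_nonneg fun n => mul_nonneg (norm_nonneg _) (hb_nonneg n k)
  refine ⟨∑' n, ‖θ n‖ * b n k + 1, by linarith, ?_⟩
  intro x hx
  -- summability of ‖x n‖ e^{α n}
  have hx1 : Summable fun n => ‖x n‖ * Real.exp (α n) := by
    have := hx 1
    simpa using this
  set S := ∑' n, ‖x n‖ * Real.exp (α n) with hS
  have hS0 : 0 ≤ S := tsum_nonneg fun n => by positivity
  -- pointwise bound on partial sums
  have hbound : ∀ n, ‖rhaly θ x n‖ * b n k ≤ S * (‖θ n‖ * b n k) := by
    intro n
    have h1 : ‖∑ j ∈ Finset.range (n + 1), x j‖ ≤ S := by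
      calc ‖∑ j ∈ Finset.range (n + 1), x j‖
          ≤ ∑ j ∈ Finset.range (n + 1), ‖x j‖ := norm_sum_le _ _
        _ ≤ ∑ j ∈ Finset.range (n + 1), ‖x j‖ * Real.exp (α j) := by
            refine Finset.sum_le_sum fun j _ => ?_
            nlinarith [Real.one_le_exp (hα_nonneg j), norm_nonneg (x j)]
        _ ≤ S := Summable.sum_le_tsum _ (fun j _ => by positivity) hx1
    have : ‖rhaly θ x n‖ ≤ S * ‖θ n‖ := by
      rw [rhaly, norm_mul]
      exact mul_le_mul_of_nonneg_right h1 (norm_nonneg _)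
    calc ‖rhaly θ x n‖ * b n k ≤ (S * ‖θ n‖) * b n k :=
          mul_le_mul_of_nonneg_right this (hb_nonneg n k)
      _ = S * (‖θ n‖ * b n k) := by ring
  have hsum : Summable fun n => ‖rhaly θ x n‖ * b n k :=
    Summable.of_nonneg_of_le (fun n => mul_nonneg (norm_nonneg _) (hb_nonneg n k)) hbound ((hθ k).mul_left S)
  refine ⟨hsum, ?_⟩
  calc ∑' n, ‖rhaly θ x n‖ * b n k
      ≤ ∑' n, S * (‖θ n‖ * b n k) := Summable.tsum_le_tsum hbound hsum ((hθ k).mul_left S)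
    _ = S * ∑' n, ‖θ n‖ * b n k := by rw [tsum_mul_left]
    _ ≤ (∑' n, ‖θ n‖ * b n k + 1) * S := by
        nlinarith
end

section
/- Let β : ℕ → ℝ be positive, nondecreasing with β_n → ∞, and weakly stable, i.e. sup_{n∈ℕ} β_{n+1}/β_n < ∞. Let a be a Köthe matrix and θ ∈ Λ_∞(β), and assume that for every k ∈ ℕ there exist m ∈ ℕ and C > 0 with e^{−k β_n} ≤ C · a_{n,m} for all n ∈ ℕ. Then the Rhaly operator R_θ : K(a) → Λ_∞(β) is well defined and continuous: for every k ∈ ℕ there exist m ∈ ℕ and C′ > 0 such that every x ∈ K(a) satisfies R_θ x ∈ Λ_∞(β) and ∑_{n=1}^∞ |(R_θ x)_n| e^{k β_n} ≤ C′ · ∑_{n=1}^∞ |x_n| a_{n,m}. -/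
open scoped BigOperators

/-- For a weakly stable exponent sequence `β`, if `θ ∈ Λ_∞(β)` and
`e^{-kβ_n} ≤ C a_{n,m}` (for each `k` some `m, C`), then `R_θ : K(a) → Λ_∞(β)` is
well defined and continuous. -/
theorem rhaly_Kothe_to_powerSeriesInfinite_continuous
    (β : ℕ → ℝ) (hβ_pos : ∀ n, 0 < β n) (hβ_mono : Monotone β)
    (hβ_top : Filter.Tendsto β Filter.atTop Filter.atTop)
    (hβ_stable : ∃ M : ℝ, ∀ n, β (n + 1) / β n ≤ M)
    (a : ℕ → ℕ → ℝ)
    (ha_nonneg : ∀ n k, 0 ≤ a n k) (ha_mono : ∀ n k, a n k ≤ a n (k + 1))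
    (ha_pos : ∀ n, ∃ k, 0 < a n k)
    (θ : ℕ → ℂ)
    (hθ : ∀ k : ℕ, Summable fun n => ‖θ n‖ * Real.exp (k * β n))
    (hcond : ∀ k : ℕ, ∃ m : ℕ, ∃ C : ℝ, 0 < C ∧
      ∀ n, Real.exp (-(k : ℝ) * β n) ≤ C * a n m) :
    ∀ k : ℕ, ∃ m : ℕ, ∃ C' : ℝ, 0 < C' ∧
      ∀ x : ℕ → ℂ, (∀ l, Summable fun n => ‖x n‖ * a n l) →
        Summable (fun n => ‖rhaly θ x n‖ * Real.exp (k * β n)) ∧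
          ∑' n, ‖rhaly θ x n‖ * Real.exp (k * β n) ≤ C' * ∑' n, ‖x n‖ * a n m := by
  intro k
  obtain ⟨m, C, hC, hCa⟩ := hcond 1
  have hCa' : ∀ n, Real.exp (-(β n)) ≤ C * a n m := by
    intro n
    have := hCa n
    simpa using this
  have hw_sum : Summable (fun n => ‖θ n‖ * Real.exp (k * β n)) := hθ k
  have hw1_sum : Summable (fun n => ‖θ n‖ * Real.exp (((k : ℝ) + 1) * β n)) := by
    have := hθ (k + 1); push_cast at this; exact this
  set S : ℝ := ∑' n, ‖θ n‖ * Real.exp (((k : ℝ) + 1) * β n) with hS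
  have hS_nonneg : 0 ≤ S := tsum_nonneg fun n => by positivity
  refine ⟨m, (S + 1) * C, mul_pos (by linarith) hC, ?_⟩
  intro x hx
  set f : ℕ → ℕ → ℝ :=
    fun j n => if j ≤ n then ‖x j‖ * (‖θ n‖ * Real.exp (k * β n)) else 0 with hf
  have hf_nonneg : ∀ j n, 0 ≤ f j n := by
    intro j n
    simp only [hf]
    split <;> positivity
  -- row summability
  have h1 : ∀ j, Summable (f j) := by
    intro j
    apply Summable.of_nonneg_of_le (hf_nonneg j) _ (hw_sum.mul_left ‖x j‖)
    intro n
    simp only [hf]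
    split
    · exact le_rfl
    · positivity
  -- key pointwise bound
  have hkey : ∀ j n, f j n ≤
      (‖x j‖ * (C * a j m)) * (‖θ n‖ * Real.exp (((k : ℝ) + 1) * β n)) := by
    intro j n
    simp only [hf]
    split
    · rename_i hjn
      have hexp : Real.exp (k * β n) ≤ (C * a j m) * Real.exp (((k : ℝ) + 1) * β n) := by
        have e1 : Real.exp ((k : ℝ) * β n)
            = Real.exp (-(β n)) * Real.exp (((k : ℝ) + 1) * β n) := by
          rw [← Real.exp_add]; ring_nf
        have e2 : Real.exp (-(β n)) ≤ Real.exp (-(β j)) :=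
          Real.exp_le_exp.mpr (by linarith [hβ_mono hjn])
        have e3 : Real.exp (-(β j)) ≤ C * a j m := hCa' j
        calc Real.exp ((k : ℝ) * β n)
            = Real.exp (-(β n)) * Real.exp (((k : ℝ) + 1) * β n) := e1
          _ ≤ Real.exp (-(β j)) * Real.exp (((k : ℝ) + 1) * β n) := by
              exact mul_le_mul_of_nonneg_right e2 (Real.exp_pos _).le
          _ ≤ (C * a j m) * Real.exp (((k : ℝ) + 1) * β n) := by
              exact mul_le_mul_of_nonneg_right e3 (Real.exp_pos _).le
      calc ‖x j‖ * (‖θ n‖ * Real.exp (k * β n))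
          ≤ ‖x j‖ * (‖θ n‖ * ((C * a j m) * Real.exp (((k : ℝ) + 1) * β n))) := by
            apply mul_le_mul_of_nonneg_left _ (norm_nonneg _)
            exact mul_le_mul_of_nonneg_left hexp (norm_nonneg _)
        _ = (‖x j‖ * (C * a j m)) * (‖θ n‖ * Real.exp (((k : ℝ) + 1) * β n)) := by ring
    · exact mul_nonneg (mul_nonneg (norm_nonneg _)
        (mul_nonneg hC.le (ha_nonneg j m))) (by positivity)
  -- row tsum bound
  have h2 : ∀ j, ∑' n, f j n ≤ (S + 1) * C * (‖x j‖ * a j m) := by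
    intro j
    have hle : ∑' n, f j n
        ≤ ∑' n, (‖x j‖ * (C * a j m)) * (‖θ n‖ * Real.exp (((k : ℝ) + 1) * β n)) :=
      Summable.tsum_le_tsum (hkey j) (h1 j) (hw1_sum.mul_left _)
    rw [tsum_mul_left] at hle
    have ht : 0 ≤ C * (‖x j‖ * a j m) :=
      mul_nonneg hC.le (mul_nonneg (norm_nonneg _) (ha_nonneg j m))
    nlinarith [hle, ht]
  have hsum2 : Summable (fun j => ∑' n, f j n) :=
    Summable.of_nonneg_of_le (fun j => tsum_nonneg (hf_nonneg j)) h2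
      ((hx m).mul_left ((S + 1) * C))
  have hF : Summable (Function.uncurry f) :=
    (summable_prod_of_nonneg (fun p => hf_nonneg p.1 p.2)).mpr ⟨h1, hsum2⟩
  -- column summability
  have hcol : ∀ n, Summable (fun j => f j n) := by
    intro n
    apply summable_of_ne_finset_zero (s := Finset.range (n + 1))
    intro j hj
    simp only [hf]
    rw [if_neg]
    exact fun h => hj (Finset.mem_range_succ_iff.mpr h)
  have hsum3 : Summable (fun n => ∑' j, f j n) := by
    have hFsymm : Summable (fun p : ℕ × ℕ => f p.2 p.1) := hF.prod_symm
    exact ((summable_prod_of_nonneg (f := fun p : ℕ × ℕ => f p.2 p.1)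
      (fun p => hf_nonneg _ _)).mp hFsymm).2
  -- column tsum value
  have hD : ∀ n, ∑' j, f j n
      = (∑ j ∈ Finset.range (n + 1), ‖x j‖) * (‖θ n‖ * Real.exp (k * β n)) := by
    intro n
    rw [tsum_eq_sum (s := Finset.range (n + 1))
      (fun j hj => by
        simp only [hf]
        rw [if_neg]
        exact fun h => hj (Finset.mem_range_succ_iff.mpr h))]
    have heq : ∑ j ∈ Finset.range (n + 1), f j n
        = ∑ j ∈ Finset.range (n + 1), ‖x j‖ * (‖θ n‖ * Real.exp (k * β n)) :=
      Finset.sum_congr rfl fun j hj => by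
        simp only [hf, if_pos (Finset.mem_range_succ_iff.mp hj)]
    rw [heq, ← Finset.sum_mul]
  have hE : ∀ n, ‖rhaly θ x n‖ * Real.exp (k * β n) ≤ ∑' j, f j n := by
    intro n
    rw [hD n]
    have hb : ‖rhaly θ x n‖ ≤ (∑ j ∈ Finset.range (n + 1), ‖x j‖) * ‖θ n‖ := by
      rw [rhaly, norm_mul]
      exact mul_le_mul_of_nonneg_right (norm_sum_le _ _) (norm_nonneg _)
    calc ‖rhaly θ x n‖ * Real.exp (k * β n)
        ≤ ((∑ j ∈ Finset.range (n + 1), ‖x j‖) * ‖θ n‖) * Real.exp (k * β n) :=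
          mul_le_mul_of_nonneg_right hb (Real.exp_pos _).le
      _ = (∑ j ∈ Finset.range (n + 1), ‖x j‖) * (‖θ n‖ * Real.exp (k * β n)) := by ring
  have htarget_sum : Summable (fun n => ‖rhaly θ x n‖ * Real.exp (k * β n)) :=
    Summable.of_nonneg_of_le (fun n => by positivity) hE hsum3
  refine ⟨htarget_sum, ?_⟩
  have step1 : ∑' n, ‖rhaly θ x n‖ * Real.exp (k * β n) ≤ ∑' n, ∑' j, f j n :=
    Summable.tsum_le_tsum hE htarget_sum hsum3
  have step2 : ∑' n, ∑' j, f j n = ∑' j, ∑' n, f j n := Summable.tsum_comm' hF h1 hcol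
  have step3 : ∑' j, ∑' n, f j n ≤ ∑' j, (S + 1) * C * (‖x j‖ * a j m) :=
    Summable.tsum_le_tsum h2 hsum2 ((hx m).mul_left _)
  rw [tsum_mul_left] at step3
  linarith [step1, step2 ▸ step3]
end

section
/- Let β : ℕ → ℝ be positive, nondecreasing with β_n → ∞, and weakly stable, i.e. sup_{n∈ℕ} β_{n+1}/β_n < ∞. Let a be a Köthe matrix and θ ∈ Λ_∞(β), and assume that there exists m ∈ ℕ such that for every k ∈ ℕ there is C > 0 with e^{−k β_n} ≤ C · a_{n,m} for all n ∈ ℕ. Then the Rhaly operator R_θ : K(a) → Λ_∞(β) satisfies the compactness criterion: there exists m ∈ ℕ such that for every k ∈ ℕ there is C′ > 0 with, for every x ∈ K(a), R_θ x ∈ Λ_∞(β) and ∑_{n=1}^∞ |(R_θ x)_n| e^{k β_n} ≤ C′ · ∑_{n=1}^∞ |x_n| a_{n,m} (the same m for all k). -/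
open scoped BigOperators

/-- For a weakly stable exponent sequence `β`, if `θ ∈ Λ_∞(β)` and there is
a single `m` with `e^{-kβ_n} ≤ C a_{n,m}` for every `k` (some `C = C(k)`), then
`R_θ : K(a) → Λ_∞(β)` satisfies the compactness criterion (one `m` works for all `k`). -/
theorem rhaly_Kothe_to_powerSeriesInfinite_compact
    (β : ℕ → ℝ) (hβ_pos : ∀ n, 0 < β n) (hβ_mono : Monotone β)
    (hβ_top : Filter.Tendsto β Filter.atTop Filter.atTop)
    (hβ_stable : ∃ M : ℝ, ∀ n, β (n + 1) / β n ≤ M)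
    (a : ℕ → ℕ → ℝ)
    (ha_nonneg : ∀ n k, 0 ≤ a n k) (ha_mono : ∀ n k, a n k ≤ a n (k + 1))
    (ha_pos : ∀ n, ∃ k, 0 < a n k)
    (θ : ℕ → ℂ)
    (hθ : ∀ k : ℕ, Summable fun n => ‖θ n‖ * Real.exp (k * β n))
    (hcond : ∃ m : ℕ, ∀ k : ℕ, ∃ C : ℝ, 0 < C ∧
      ∀ n, Real.exp (-(k : ℝ) * β n) ≤ C * a n m) :
    ∃ m : ℕ, ∀ k : ℕ, ∃ C' : ℝ, 0 < C' ∧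
      ∀ x : ℕ → ℂ, (∀ l, Summable fun n => ‖x n‖ * a n l) →
        Summable (fun n => ‖rhaly θ x n‖ * Real.exp (k * β n)) ∧
          ∑' n, ‖rhaly θ x n‖ * Real.exp (k * β n) ≤ C' * ∑' n, ‖x n‖ * a n m := by
  obtain ⟨m, hm⟩ := hcond
  obtain ⟨C, hC, hC1⟩ := hm 0
  refine ⟨m, fun k => ?_⟩
  set T := ∑' n, ‖θ n‖ * Real.exp (k * β n) with hT
  have hTnn : 0 ≤ T := tsum_nonneg (fun n => mul_nonneg (norm_nonneg _) (Real.exp_pos _).le)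
  refine ⟨C * T + 1, by positivity, fun x hx => ?_⟩
  set S := ∑' n, ‖x n‖ * a n m with hS
  have hSnn : 0 ≤ S := tsum_nonneg (fun n => mul_nonneg (norm_nonneg _) (ha_nonneg _ _))
  have hone : ∀ n, (1 : ℝ) ≤ C * a n m := by
    intro n
    have := hC1 n
    simpa using this
  have hpart : ∀ n, ∑ j ∈ Finset.range (n + 1), ‖x j‖ ≤ C * S := by
    intro n
    calc ∑ j ∈ Finset.range (n + 1), ‖x j‖
        ≤ ∑ j ∈ Finset.range (n + 1), C * (‖x j‖ * a j m) := by
          refine Finset.sum_le_sum fun j _ => ?_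
          calc ‖x j‖ = ‖x j‖ * 1 := (mul_one _).symm
            _ ≤ ‖x j‖ * (C * a j m) :=
                mul_le_mul_of_nonneg_left (hone j) (norm_nonneg _)
            _ = C * (‖x j‖ * a j m) := by ring
      _ = C * ∑ j ∈ Finset.range (n + 1), ‖x j‖ * a j m := by rw [Finset.mul_sum]
      _ ≤ C * S := by
          refine mul_le_mul_of_nonneg_left ?_ hC.le
          exact Summable.sum_le_tsum _ (fun j _ => mul_nonneg (norm_nonneg _) (ha_nonneg _ _)) (hx m)
  have hbound : ∀ n, ‖rhaly θ x n‖ * Real.exp (k * β n)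
      ≤ (C * S) * (‖θ n‖ * Real.exp (k * β n)) := by
    intro n
    have h1 : ‖rhaly θ x n‖ ≤ (C * S) * ‖θ n‖ := by
      rw [rhaly, norm_mul]
      refine mul_le_mul_of_nonneg_right ?_ (norm_nonneg _)
      exact (norm_sum_le _ _).trans (hpart n)
    calc ‖rhaly θ x n‖ * Real.exp (k * β n)
        ≤ (C * S) * ‖θ n‖ * Real.exp (k * β n) :=
          mul_le_mul_of_nonneg_right h1 (Real.exp_pos _).le
      _ = (C * S) * (‖θ n‖ * Real.exp (k * β n)) := by ring
  have hsum : Summable (fun n => ‖rhaly θ x n‖ * Real.exp (k * β n)) := by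
    refine Summable.of_nonneg_of_le
      (fun n => mul_nonneg (norm_nonneg _) (Real.exp_pos _).le) hbound ?_
    exact (hθ k).mul_left _
  refine ⟨hsum, ?_⟩
  calc ∑' n, ‖rhaly θ x n‖ * Real.exp (k * β n)
      ≤ ∑' n, (C * S) * (‖θ n‖ * Real.exp (k * β n)) :=
        Summable.tsum_le_tsum hbound hsum ((hθ k).mul_left _)
    _ = (C * S) * T := by rw [tsum_mul_left]
    _ ≤ (C * T + 1) * S := by nlinarith
end

section
/- Let α, β : ℕ → ℝ be nondecreasing, tending to ∞, with α_n ≥ 0 and β_n > 0, and let β be weakly stable, i.e. sup_{n∈ℕ} β_{n+1}/β_n < ∞. Assume there exist A, B > 0 with α_n ≤ A·β_n + B for all n ∈ ℕ. Then for every θ ∈ Λ_∞(β) the Rhaly operator R_θ : Λ_1(α) → Λ_∞(β) is well defined, continuous and compact: there exists m ∈ ℕ such that for every k ∈ ℕ there is C > 0 with, for every x ∈ Λ_1(α), R_θ x ∈ Λ_∞(β) and ∑_{n=1}^∞ |(R_θ x)_n| e^{k β_n} ≤ C · ∑_{n=1}^∞ |x_n| e^{−α_n/m} (the same m for all k). 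-/
open scoped BigOperators

/-- If `β` is weakly stable and `α_n ≤ A β_n + B`, then for every
`θ ∈ Λ_∞(β)` the Rhaly operator `R_θ : Λ_1(α) → Λ_∞(β)` is well defined, continuous
and compact (one domain index `m` serves for all target indices `k`). -/
theorem rhaly_finiteType_to_infiniteType_compact
    (α β : ℕ → ℝ)
    (hα_mono : Monotone α) (hα_nonneg : ∀ n, 0 ≤ α n)
    (hα_top : Filter.Tendsto α Filter.atTop Filter.atTop)
    (hβ_pos : ∀ n, 0 < β n) (hβ_mono : Monotone β)
    (hβ_top : Filter.Tendsto β Filter.atTop Filter.atTop)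
    (hβ_stable : ∃ M : ℝ, ∀ n, β (n + 1) / β n ≤ M)
    (hAB : ∃ A B : ℝ, 0 < A ∧ 0 < B ∧ ∀ n, α n ≤ A * β n + B)
    (θ : ℕ → ℂ)
    (hθ : ∀ k : ℕ, Summable fun n => ‖θ n‖ * Real.exp (k * β n)) :
    ∃ m : ℕ, 0 < m ∧ ∀ k : ℕ, ∃ C : ℝ, 0 < C ∧
      ∀ x : ℕ → ℂ,
        (∀ l : ℕ, 0 < l → Summable fun n => ‖x n‖ * Real.exp (-(α n) / l)) →
        Summable (fun n => ‖rhaly θ x n‖ * Real.exp (k * β n)) ∧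
          ∑' n, ‖rhaly θ x n‖ * Real.exp (k * β n)
            ≤ C * ∑' n, ‖x n‖ * Real.exp (-(α n) / m) := by
  obtain ⟨A, B, hA, hB, hAB⟩ := hAB
  refine ⟨1, one_pos, fun k => ?_⟩
  have hθK := hθ (⌈A⌉₊ + k)
  set T := ∑' n, ‖θ n‖ * Real.exp (((⌈A⌉₊ + k : ℕ) : ℝ) * β n) with hT
  have hT0 : 0 ≤ T := tsum_nonneg fun n => by positivity
  refine ⟨Real.exp B * (T + 1), by positivity, fun x hx => ?_⟩
  have hS : Summable fun n => ‖x n‖ * Real.exp (-(α n) / ((1 : ℕ) : ℝ)) := hx 1 one_pos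
  set S := ∑' n, ‖x n‖ * Real.exp (-(α n) / ((1 : ℕ) : ℝ)) with hSdef
  have hS0 : 0 ≤ S := tsum_nonneg fun n => by positivity
  have key : ∀ n, ‖rhaly θ x n‖ * Real.exp (k * β n)
      ≤ (Real.exp B * S) * (‖θ n‖ * Real.exp (((⌈A⌉₊ + k : ℕ) : ℝ) * β n)) := by
    intro n
    have hsum : (∑ j ∈ Finset.range (n+1), ‖x j‖) ≤ Real.exp (α n) * S := by
      calc ∑ j ∈ Finset.range (n+1), ‖x j‖
          ≤ ∑ j ∈ Finset.range (n+1),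
              Real.exp (α n) * (‖x j‖ * Real.exp (-(α j) / ((1 : ℕ) : ℝ))) := by
            apply Finset.sum_le_sum
            intro j hj
            have hj' : α j ≤ α n := hα_mono (Nat.lt_succ_iff.mp (Finset.mem_range.mp hj))
            have h1 : (1:ℝ) ≤ Real.exp (α n) * Real.exp (-(α j) / ((1 : ℕ) : ℝ)) := by
              rw [Nat.cast_one, div_one, ← Real.exp_add]
              have : (0:ℝ) ≤ α n + -(α j) := by linarith
              calc (1:ℝ) = Real.exp 0 := (Real.exp_zero).symm
                _ ≤ _ := Real.exp_le_exp.mpr this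
            calc ‖x j‖ = ‖x j‖ * 1 := (mul_one _).symm
              _ ≤ ‖x j‖ * (Real.exp (α n) * Real.exp (-(α j) / ((1 : ℕ) : ℝ))) :=
                  mul_le_mul_of_nonneg_left h1 (norm_nonneg _)
              _ = Real.exp (α n) * (‖x j‖ * Real.exp (-(α j) / ((1 : ℕ) : ℝ))) := by ring
        _ = Real.exp (α n) *
              ∑ j ∈ Finset.range (n+1), ‖x j‖ * Real.exp (-(α j) / ((1 : ℕ) : ℝ)) := by
            rw [Finset.mul_sum]
        _ ≤ Real.exp (α n) * S := by
            apply mul_le_mul_of_nonneg_left _ (Real.exp_pos _).le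
            exact Summable.sum_le_tsum _ (fun i _ => by positivity) hS
    have hrhaly : ‖rhaly θ x n‖ ≤ (∑ j ∈ Finset.range (n+1), ‖x j‖) * ‖θ n‖ := by
      rw [rhaly, norm_mul]
      exact mul_le_mul_of_nonneg_right (norm_sum_le _ _) (norm_nonneg _)
    have hexp : Real.exp (α n) * Real.exp (k * β n)
        ≤ Real.exp B * Real.exp (((⌈A⌉₊ + k : ℕ) : ℝ) * β n) := by
      rw [← Real.exp_add, ← Real.exp_add]
      apply Real.exp_le_exp.mpr
      have h1 : α n ≤ A * β n + B := hAB n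
      have h2 : A ≤ (⌈A⌉₊ : ℝ) := Nat.le_ceil A
      have h3 : 0 < β n := hβ_pos n
      have hcast : ((⌈A⌉₊ + k : ℕ) : ℝ) = (⌈A⌉₊ : ℝ) + k := by push_cast; ring
      rw [hcast]
      nlinarith [mul_le_mul_of_nonneg_right h2 h3.le]
    calc ‖rhaly θ x n‖ * Real.exp (k * β n)
        ≤ ((Real.exp (α n) * S) * ‖θ n‖) * Real.exp (k * β n) := by
          have h := hrhaly.trans (mul_le_mul_of_nonneg_right hsum (norm_nonneg _))
          exact mul_le_mul_of_nonneg_right h (Real.exp_pos _).le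
      _ = (S * ‖θ n‖) * (Real.exp (α n) * Real.exp (k * β n)) := by ring
      _ ≤ (S * ‖θ n‖) * (Real.exp B * Real.exp (((⌈A⌉₊ + k : ℕ) : ℝ) * β n)) := by
          apply mul_le_mul_of_nonneg_left hexp (by positivity)
      _ = (Real.exp B * S) * (‖θ n‖ * Real.exp (((⌈A⌉₊ + k : ℕ) : ℝ) * β n)) := by ring
  have hsummable : Summable fun n => ‖rhaly θ x n‖ * Real.exp (k * β n) :=
    Summable.of_nonneg_of_le (fun n => by positivity) key (hθK.mul_left _)
  refine ⟨hsummable, ?_⟩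
  calc ∑' n, ‖rhaly θ x n‖ * Real.exp (k * β n)
      ≤ ∑' n, (Real.exp B * S) * (‖θ n‖ * Real.exp (((⌈A⌉₊ + k : ℕ) : ℝ) * β n)) :=
        Summable.tsum_le_tsum key hsummable (hθK.mul_left _)
    _ = (Real.exp B * S) * T := by rw [tsum_mul_left]
    _ ≤ Real.exp B * (T + 1) * S := by nlinarith [Real.exp_pos B]
end

section
/- Let a be a Köthe matrix, let β : ℕ → ℝ be nondecreasing with β_n ≥ 0 and β_n → ∞, and let θ ∈ Λ_1(β). Assume that for every k ∈ ℕ there exist m ∈ ℕ and C > 0 with e^{−β_n/k} ≤ C · a_{n,m} for all n ∈ ℕ. Then the Rhaly operator R_θ : K(a) → Λ_1(β) is well defined and continuous: for every k ∈ ℕ there exist m ∈ ℕ and C′ > 0 such that every x ∈ K(a) satisfies R_θ x ∈ Λ_1(β) and ∑_{n=1}^∞ |(R_θ x)_n| e^{−β_n/k} ≤ C′ · ∑_{n=1}^∞ |x_n| a_{n,m}. -/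
open scoped BigOperators

/-- If `θ ∈ Λ_1(β)` and for every `k ≥ 1` there are `m, C > 0` with
`e^{-β_n/k} ≤ C a_{n,m}`, then `R_θ : K(a) → Λ_1(β)` is well defined and continuous. -/
theorem rhaly_Kothe_to_powerSeriesFinite_continuous
    (a : ℕ → ℕ → ℝ)
    (ha_nonneg : ∀ n k, 0 ≤ a n k) (ha_mono : ∀ n k, a n k ≤ a n (k + 1))
    (ha_pos : ∀ n, ∃ k, 0 < a n k)
    (β : ℕ → ℝ) (hβ_mono : Monotone β) (hβ_nonneg : ∀ n, 0 ≤ β n)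
    (hβ_top : Filter.Tendsto β Filter.atTop Filter.atTop)
    (θ : ℕ → ℂ)
    (hθ : ∀ k : ℕ, 0 < k → Summable fun n => ‖θ n‖ * Real.exp (-(β n) / k))
    (hcond : ∀ k : ℕ, 0 < k → ∃ m : ℕ, ∃ C : ℝ, 0 < C ∧
      ∀ n, Real.exp (-(β n) / k) ≤ C * a n m) :
    ∀ k : ℕ, 0 < k → ∃ m : ℕ, ∃ C' : ℝ, 0 < C' ∧
      ∀ x : ℕ → ℂ, (∀ l, Summable fun n => ‖x n‖ * a n l) →
        Summable (fun n => ‖rhaly θ x n‖ * Real.exp (-(β n) / k)) ∧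
          ∑' n, ‖rhaly θ x n‖ * Real.exp (-(β n) / k) ≤ C' * ∑' n, ‖x n‖ * a n m := by
  intro k hk
  have hk2 : (0 : ℕ) < 2 * k := by omega
  obtain ⟨m, C, hC, hCa⟩ := hcond (2 * k) hk2
  have hθ2 := hθ (2 * k) hk2
  set T : ℝ := ∑' n, ‖θ n‖ * Real.exp (-(β n) / (2 * k : ℕ)) with hT
  have hT0 : 0 ≤ T := tsum_nonneg fun n => by positivity
  refine ⟨m, C * (T + 1), by positivity, ?_⟩
  intro x hx
  have hkR : (0 : ℝ) < (k : ℝ) := by exact_mod_cast hk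
  have hsplit : ∀ n, Real.exp (-(β n) / k) =
      Real.exp (-(β n) / (2 * k : ℕ)) * Real.exp (-(β n) / (2 * k : ℕ)) := by
    intro n
    rw [← Real.exp_add]
    congr 1
    push_cast
    field_simp
    ring
  set g : ℕ → ℝ := fun j => ‖x j‖ * Real.exp (-(β j) / (2 * k : ℕ)) with hg
  have hg_sum : Summable g := by
    apply Summable.of_nonneg_of_le
      (fun j => mul_nonneg (norm_nonneg _) (Real.exp_pos _).le)
      (fun j => ?_) ((hx m).mul_left C)
    calc g j ≤ ‖x j‖ * (C * a j m) :=
          mul_le_mul_of_nonneg_left (hCa j) (norm_nonneg _)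
      _ = C * (‖x j‖ * a j m) := by ring
  set S : ℝ := ∑' n, ‖x n‖ * a n m with hS
  have hS0 : 0 ≤ S := tsum_nonneg fun n => mul_nonneg (norm_nonneg _) (ha_nonneg n m)
  have hgS : ∑' j, g j ≤ C * S := by
    rw [hS, ← tsum_mul_left]
    exact Summable.tsum_le_tsum (fun j => by
        calc g j ≤ ‖x j‖ * (C * a j m) :=
              mul_le_mul_of_nonneg_left (hCa j) (norm_nonneg _)
          _ = C * (‖x j‖ * a j m) := by ring)
      hg_sum ((hx m).mul_left C)
  -- pointwise bound
  have hpt : ∀ n, ‖rhaly θ x n‖ * Real.exp (-(β n) / k) ≤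
      (C * S) * (‖θ n‖ * Real.exp (-(β n) / (2 * k : ℕ))) := by
    intro n
    have h1 : ‖rhaly θ x n‖ ≤ (∑ j ∈ Finset.range (n + 1), ‖x j‖) * ‖θ n‖ := by
      rw [rhaly, norm_mul]
      exact mul_le_mul_of_nonneg_right (norm_sum_le _ _) (norm_nonneg _)
    have h2 : (∑ j ∈ Finset.range (n + 1), ‖x j‖) * Real.exp (-(β n) / (2 * k : ℕ))
        ≤ C * S := by
      rw [Finset.sum_mul]
      calc (∑ j ∈ Finset.range (n + 1), ‖x j‖ * Real.exp (-(β n) / (2 * k : ℕ)))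
          ≤ ∑ j ∈ Finset.range (n + 1), g j := by
            apply Finset.sum_le_sum
            intro j hj
            apply mul_le_mul_of_nonneg_left _ (norm_nonneg _)
            apply Real.exp_le_exp.mpr
            apply div_le_div_of_nonneg_right _ (by positivity)
            · simp only [neg_le_neg_iff]
              exact hβ_mono (Nat.lt_succ_iff.mp (Finset.mem_range.mp hj))
        _ ≤ ∑' j, g j := Summable.sum_le_tsum _ (fun j _ => mul_nonneg (norm_nonneg _) (Real.exp_pos _).le) hg_sum
        _ ≤ C * S := hgS
    calc ‖rhaly θ x n‖ * Real.exp (-(β n) / k)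
        ≤ ((∑ j ∈ Finset.range (n + 1), ‖x j‖) * ‖θ n‖) * Real.exp (-(β n) / k) :=
          mul_le_mul_of_nonneg_right h1 (Real.exp_pos _).le
      _ = ((∑ j ∈ Finset.range (n + 1), ‖x j‖) * Real.exp (-(β n) / (2 * k : ℕ))) *
            (‖θ n‖ * Real.exp (-(β n) / (2 * k : ℕ))) := by rw [hsplit n]; ring
      _ ≤ (C * S) * (‖θ n‖ * Real.exp (-(β n) / (2 * k : ℕ))) :=
          mul_le_mul_of_nonneg_right h2 (by positivity)
  have hsum : Summable (fun n => ‖rhaly θ x n‖ * Real.exp (-(β n) / k)) :=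
    Summable.of_nonneg_of_le (fun n => by positivity) hpt (hθ2.mul_left _)
  refine ⟨hsum, ?_⟩
  calc ∑' n, ‖rhaly θ x n‖ * Real.exp (-(β n) / k)
      ≤ ∑' n, (C * S) * (‖θ n‖ * Real.exp (-(β n) / (2 * k : ℕ))) :=
        Summable.tsum_le_tsum hpt hsum (hθ2.mul_left _)
    _ = (C * S) * T := by rw [tsum_mul_left]
    _ ≤ C * (T + 1) * S := by nlinarith
end

section
/- Let a be a Köthe matrix, let β : ℕ → ℝ be nondecreasing with β_n ≥ 0 and β_n → ∞, and let θ ∈ Λ_1(β). Assume that there exists m ∈ ℕ such that for every k ∈ ℕ there is C > 0 with e^{−β_n/k} ≤ C · a_{n,m} for all n ∈ ℕ. Then the Rhaly operator R_θ : K(a) → Λ_1(β) satisfies the compactness criterion: there exists m ∈ ℕ such that for every k ∈ ℕ there is C′ > 0 with, for every x ∈ K(a), R_θ x ∈ Λ_1(β) and ∑_{n=1}^∞ |(R_θ x)_n| e^{−β_n/k} ≤ C′ · ∑_{n=1}^∞ |x_n| a_{n,m} (the same m for all k). -/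
/-!
For `j ≤ n`, monotonicity of `β` splits the weight as
`e^{-β_n/k} ≤ e^{-β_n/2k} · e^{-β_j/2k}`, so the partial sums in `R_θ x` give
`‖R_θ x‖_k ≤ ‖θ‖_{2k} · ‖x‖_{2k}`. The hypothesis on `a` then bounds `‖x‖_{2k}` by
`C · ∑ |x_n| a_{n,m}` with one `m` serving every `k`.
-/

open scoped BigOperators

theorem exp_neg_div_le_mul_exp_neg_div_two_mul {b c k : ℝ} (hcb : c ≤ b) (hk : 0 ≤ k) :
    Real.exp (-b / k) ≤ Real.exp (-b / (2 * k)) * Real.exp (-c / (2 * k)) := by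
  rw [← Real.exp_add, Real.exp_le_exp]
  calc -b / k = -b / (2 * k) + -b / (2 * k) := by ring
    _ ≤ -b / (2 * k) + -c / (2 * k) := by gcongr

section Rhaly

variable {θ x : ℕ → ℂ} {u v w : ℕ → ℝ}

theorem norm_rhaly_mul_le (hu : ∀ n, 0 ≤ u n) (hv : ∀ j, 0 ≤ v j) (hw : ∀ n, 0 ≤ w n)
    (huvw : ∀ j n, j ≤ n → w n ≤ u n * v j) (hx : Summable fun j => ‖x j‖ * v j) (n : ℕ) :
    ‖rhaly θ x n‖ * w n ≤ ‖θ n‖ * u n * ∑' j, ‖x j‖ * v j := by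
  have hnorm : ‖rhaly θ x n‖ ≤ (∑ j ∈ Finset.range (n + 1), ‖x j‖) * ‖θ n‖ := by
    rw [rhaly, norm_mul]
    gcongr
    exact norm_sum_le _ _
  calc ‖rhaly θ x n‖ * w n
      ≤ (∑ j ∈ Finset.range (n + 1), ‖x j‖) * ‖θ n‖ * w n := by gcongr; exact hw n
    _ = ‖θ n‖ * ∑ j ∈ Finset.range (n + 1), ‖x j‖ * w n := by
      rw [Finset.mul_sum, Finset.sum_mul, Finset.sum_mul]
      exact Finset.sum_congr rfl fun j _ => by ring
    _ ≤ ‖θ n‖ * ∑ j ∈ Finset.range (n + 1), ‖x j‖ * (u n * v j) := by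
      gcongr with j hj
      exact huvw j n (Nat.lt_succ_iff.mp (Finset.mem_range.mp hj))
    _ = ‖θ n‖ * u n * ∑ j ∈ Finset.range (n + 1), ‖x j‖ * v j := by
      rw [Finset.mul_sum, Finset.mul_sum]
      exact Finset.sum_congr rfl fun j _ => by ring
    _ ≤ ‖θ n‖ * u n * ∑' j, ‖x j‖ * v j := by
      gcongr
      · exact mul_nonneg (norm_nonneg _) (hu n)
      · exact hx.sum_le_tsum _ fun j _ => mul_nonneg (norm_nonneg _) (hv j)

theorem summable_rhaly_and_tsum_le (hu : ∀ n, 0 ≤ u n) (hv : ∀ j, 0 ≤ v j)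
    (hw : ∀ n, 0 ≤ w n) (huvw : ∀ j n, j ≤ n → w n ≤ u n * v j)
    (hθ : Summable fun n => ‖θ n‖ * u n) (hx : Summable fun j => ‖x j‖ * v j) :
    Summable (fun n => ‖rhaly θ x n‖ * w n) ∧
      ∑' n, ‖rhaly θ x n‖ * w n ≤ (∑' n, ‖θ n‖ * u n) * ∑' j, ‖x j‖ * v j := by
  have hbound := norm_rhaly_mul_le (θ := θ) hu hv hw huvw hx
  have hsum : Summable (fun n => ‖rhaly θ x n‖ * w n) :=
    .of_nonneg_of_le (fun n => mul_nonneg (norm_nonneg _) (hw n)) hbound (hθ.mul_right _)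
  refine ⟨hsum, ?_⟩
  rw [← tsum_mul_right]
  exact hsum.tsum_le_tsum hbound (hθ.mul_right _)

end Rhaly

theorem rhaly_Kothe_to_powerSeriesFinite_compact_general
    (a : ℕ → ℕ → ℝ)
    (β : ℕ → ℝ) (hβ_mono : Monotone β)
    (θ : ℕ → ℂ)
    (hθ : ∀ k : ℕ, 0 < k → Summable fun n => ‖θ n‖ * Real.exp (-(β n) / k))
    (hcond : ∃ m : ℕ, ∀ k : ℕ, 0 < k → ∃ C : ℝ, 0 < C ∧
      ∀ n, Real.exp (-(β n) / k) ≤ C * a n m) :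
    ∃ m : ℕ, ∀ k : ℕ, 0 < k → ∃ C' : ℝ, 0 < C' ∧
      ∀ x : ℕ → ℂ, (∀ l, Summable fun n => ‖x n‖ * a n l) →
        Summable (fun n => ‖rhaly θ x n‖ * Real.exp (-(β n) / k)) ∧
          ∑' n, ‖rhaly θ x n‖ * Real.exp (-(β n) / k) ≤ C' * ∑' n, ‖x n‖ * a n m := by
  obtain ⟨m, hm⟩ := hcond
  refine ⟨m, fun k hk => ?_⟩
  obtain ⟨C, hC, hCa⟩ := hm (2 * k) (by positivity)
  have hθ2 := hθ (2 * k) (by positivity)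
  push_cast at hCa hθ2
  set S := ∑' n, ‖θ n‖ * Real.exp (-(β n) / (2 * k))
  have hS_nonneg : 0 ≤ S := tsum_nonneg fun n => by positivity
  refine ⟨C * (S + 1), by positivity, fun x hx => ?_⟩
  have hxa : ∀ j, ‖x j‖ * Real.exp (-(β j) / (2 * k)) ≤ C * (‖x j‖ * a j m) := fun j => by
    rw [mul_left_comm]
    exact mul_le_mul_of_nonneg_left (hCa j) (norm_nonneg _)
  have hx2 : Summable fun j => ‖x j‖ * Real.exp (-(β j) / (2 * k)) :=
    .of_nonneg_of_le (fun j => by positivity) hxa ((hx m).mul_left C)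
  have hT : ∑' j, ‖x j‖ * Real.exp (-(β j) / (2 * k)) ≤ C * ∑' j, ‖x j‖ * a j m := by
    rw [← tsum_mul_left]
    exact hx2.tsum_le_tsum hxa ((hx m).mul_left C)
  have hT_nonneg : 0 ≤ ∑' j, ‖x j‖ * Real.exp (-(β j) / (2 * k)) :=
    tsum_nonneg fun j => by positivity
  obtain ⟨hsum, hle⟩ := summable_rhaly_and_tsum_le (fun n => by positivity)
    (fun j => by positivity) (fun n => by positivity)
    (fun j n hjn => exp_neg_div_le_mul_exp_neg_div_two_mul (hβ_mono hjn) k.cast_nonneg) hθ2 hx2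
  refine ⟨hsum, hle.trans ?_⟩
  nlinarith

/-- If `θ ∈ Λ_1(β)` and there is one `m` with `e^{-β_n/k} ≤ C a_{n,m}` for
every `k ≥ 1` (some `C = C(k)`), then `R_θ : K(a) → Λ_1(β)` satisfies the compactness
criterion (the same `m` works for all `k`). -/
theorem rhaly_Kothe_to_powerSeriesFinite_compact
    (a : ℕ → ℕ → ℝ)
    (ha_nonneg : ∀ n k, 0 ≤ a n k) (ha_mono : ∀ n k, a n k ≤ a n (k + 1))
    (ha_pos : ∀ n, ∃ k, 0 < a n k)
    (β : ℕ → ℝ) (hβ_mono : Monotone β) (hβ_nonneg : ∀ n, 0 ≤ β n)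
    (hβ_top : Filter.Tendsto β Filter.atTop Filter.atTop)
    (θ : ℕ → ℂ)
    (hθ : ∀ k : ℕ, 0 < k → Summable fun n => ‖θ n‖ * Real.exp (-(β n) / k))
    (hcond : ∃ m : ℕ, ∀ k : ℕ, 0 < k → ∃ C : ℝ, 0 < C ∧
      ∀ n, Real.exp (-(β n) / k) ≤ C * a n m) :
    ∃ m : ℕ, ∀ k : ℕ, 0 < k → ∃ C' : ℝ, 0 < C' ∧
      ∀ x : ℕ → ℂ, (∀ l, Summable fun n => ‖x n‖ * a n l) →
        Summable (fun n => ‖rhaly θ x n‖ * Real.exp (-(β n) / k)) ∧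
          ∑' n, ‖rhaly θ x n‖ * Real.exp (-(β n) / k) ≤ C' * ∑' n, ‖x n‖ * a n m :=
  rhaly_Kothe_to_powerSeriesFinite_compact_general a β hβ_mono θ hθ hcond
end

section
/- Let α, β : ℕ → ℝ be nondecreasing, nonnegative, tending to ∞, and suppose there exist A, B > 0 with α_n ≤ A·β_n + B for all n ∈ ℕ. Then for every θ ∈ Λ_1(β) the Rhaly operator R_θ : Λ_1(α) → Λ_1(β) is well defined and continuous: for every k ∈ ℕ there exist m ∈ ℕ and C > 0 such that every x ∈ Λ_1(α) satisfies R_θ x ∈ Λ_1(β) and ∑_{n=1}^∞ |(R_θ x)_n| e^{−β_n/k} ≤ C · ∑_{n=1}^∞ |x_n| e^{−α_n/m}. -/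
open scoped BigOperators

/-- If `α_n ≤ A β_n + B`, then for every `θ ∈ Λ_1(β)` the Rhaly operator
`R_θ : Λ_1(α) → Λ_1(β)` is well defined and continuous. -/
theorem rhaly_finiteType_to_finiteType_continuous
    (α β : ℕ → ℝ)
    (hα_mono : Monotone α) (hα_nonneg : ∀ n, 0 ≤ α n)
    (hα_top : Filter.Tendsto α Filter.atTop Filter.atTop)
    (hβ_mono : Monotone β) (hβ_nonneg : ∀ n, 0 ≤ β n)
    (hβ_top : Filter.Tendsto β Filter.atTop Filter.atTop)
    (hAB : ∃ A B : ℝ, 0 < A ∧ 0 < B ∧ ∀ n, α n ≤ A * β n + B)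
    (θ : ℕ → ℂ)
    (hθ : ∀ k : ℕ, 0 < k → Summable fun n => ‖θ n‖ * Real.exp (-(β n) / k)) :
    ∀ k : ℕ, 0 < k → ∃ m : ℕ, 0 < m ∧ ∃ C : ℝ, 0 < C ∧
      ∀ x : ℕ → ℂ,
        (∀ l : ℕ, 0 < l → Summable fun n => ‖x n‖ * Real.exp (-(α n) / l)) →
        Summable (fun n => ‖rhaly θ x n‖ * Real.exp (-(β n) / k)) ∧
          ∑' n, ‖rhaly θ x n‖ * Real.exp (-(β n) / k)
            ≤ C * ∑' n, ‖x n‖ * Real.exp (-(α n) / m) := by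
  intro k hk
  obtain ⟨A, B, hA, hB, hABle⟩ := hAB
  set m : ℕ := ⌈2 * (k : ℝ) * A⌉₊ + 1 with hm_def
  have hm : 0 < m := Nat.succ_pos _
  have hmR : (0 : ℝ) < m := by exact_mod_cast hm
  have hkR : (0 : ℝ) < k := by exact_mod_cast hk
  have hmge : 2 * (k : ℝ) * A ≤ m := by
    calc 2 * (k : ℝ) * A ≤ ⌈2 * (k : ℝ) * A⌉₊ := Nat.le_ceil _
    _ ≤ m := Nat.cast_le.mpr (Nat.le_succ _)
  have h2k : (0 : ℕ) < 2 * k := by omega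
  have hθ2k := hθ (2 * k) h2k
  set S : ℝ := ∑' n, ‖θ n‖ * Real.exp (-(β n) / (2 * k : ℕ)) with hS_def
  have hS_nonneg : 0 ≤ S := tsum_nonneg fun n => by positivity
  refine ⟨m, hm, Real.exp (B / m) * (S + 1), by positivity, ?_⟩
  intro x hx
  have hxm := hx m hm
  set T : ℝ := ∑' n, ‖x n‖ * Real.exp (-(α n) / m) with hT_def
  have hT_nonneg : 0 ≤ T := tsum_nonneg fun n => by positivity
  -- key pointwise bound
  have key : ∀ n, ‖rhaly θ x n‖ * Real.exp (-(β n) / k)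
      ≤ Real.exp (B / m) * (‖θ n‖ * Real.exp (-(β n) / (2 * k : ℕ))) * T := by
    intro n
    have h1 : ‖rhaly θ x n‖ ≤ (∑ j ∈ Finset.range (n + 1), ‖x j‖) * ‖θ n‖ := by
      rw [rhaly, norm_mul]
      gcongr
      exact norm_sum_le _ _
    have h2 : (∑ j ∈ Finset.range (n + 1), ‖x j‖) ≤ T * Real.exp (α n / m) := by
      have : ∀ j ∈ Finset.range (n + 1), ‖x j‖
          ≤ (‖x j‖ * Real.exp (-(α j) / m)) * Real.exp (α n / m) := by
        intro j hj
        have hjn : j ≤ n := Nat.lt_succ_iff.mp (Finset.mem_range.mp hj)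
        have hdiv : α j / m ≤ α n / m := by gcongr; exact hα_mono hjn
        calc ‖x j‖ = ‖x j‖ * (Real.exp (-(α j) / m) * Real.exp (α j / m)) := by
              rw [← Real.exp_add]; ring_nf; simp
          _ ≤ ‖x j‖ * (Real.exp (-(α j) / m) * Real.exp (α n / m)) := by
              gcongr
          _ = (‖x j‖ * Real.exp (-(α j) / m)) * Real.exp (α n / m) := by ring
      calc (∑ j ∈ Finset.range (n + 1), ‖x j‖)
          ≤ ∑ j ∈ Finset.range (n + 1), (‖x j‖ * Real.exp (-(α j) / m)) * Real.exp (α n / m) :=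
            Finset.sum_le_sum this
        _ = (∑ j ∈ Finset.range (n + 1), ‖x j‖ * Real.exp (-(α j) / m)) * Real.exp (α n / m) := by
            rw [Finset.sum_mul]
        _ ≤ T * Real.exp (α n / m) := by
            gcongr
            exact Summable.sum_le_tsum _ (fun i _ => by positivity) hxm
    have h3 : Real.exp (α n / m) * Real.exp (-(β n) / k)
        ≤ Real.exp (B / m) * Real.exp (-(β n) / (2 * k : ℕ)) := by
      rw [← Real.exp_add, ← Real.exp_add]
      apply Real.exp_le_exp.mpr
      have hα' : α n / m ≤ (A * β n + B) / m := by gcongr; exact hABle n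
      have h2kR : ((2 * k : ℕ) : ℝ) = 2 * (k : ℝ) := by push_cast; ring
      have hAb : A * β n / m ≤ β n / (2 * k : ℕ) := by
        rw [h2kR, div_le_div_iff₀ hmR (by positivity)]
        nlinarith [hβ_nonneg n, mul_le_mul_of_nonneg_left hmge (hβ_nonneg n)]
      have : α n / m ≤ A * β n / m + B / m := by
        calc α n / m ≤ (A * β n + B) / m := hα'
          _ = A * β n / m + B / m := by ring
      have hsplit : -(β n) / k = -(β n) / (2 * k : ℕ) + -(β n) / (2 * k : ℕ) := by
        push_cast
        field_simp
        ring
      calc α n / m + -(β n) / k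
          ≤ (A * β n / m + B / m) + (-(β n) / (2 * k : ℕ) + -(β n) / (2 * k : ℕ)) := by
            rw [← hsplit]; exact add_le_add this le_rfl
        _ ≤ (β n / (2 * k : ℕ) + B / m) + (-(β n) / (2 * k : ℕ) + -(β n) / (2 * k : ℕ)) := by
            exact add_le_add (add_le_add hAb le_rfl) le_rfl
        _ = B / m + -(β n) / (2 * k : ℕ) := by ring
    calc ‖rhaly θ x n‖ * Real.exp (-(β n) / k)
        ≤ ((∑ j ∈ Finset.range (n + 1), ‖x j‖) * ‖θ n‖) * Real.exp (-(β n) / k) := by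
          gcongr
      _ ≤ ((T * Real.exp (α n / m)) * ‖θ n‖) * Real.exp (-(β n) / k) := by
          gcongr
      _ = T * ‖θ n‖ * (Real.exp (α n / m) * Real.exp (-(β n) / k)) := by ring
      _ ≤ T * ‖θ n‖ * (Real.exp (B / m) * Real.exp (-(β n) / (2 * k : ℕ))) := by
          gcongr
      _ = Real.exp (B / m) * (‖θ n‖ * Real.exp (-(β n) / (2 * k : ℕ))) * T := by ring
  have hg_summable : Summable fun n =>
      Real.exp (B / m) * (‖θ n‖ * Real.exp (-(β n) / (2 * k : ℕ))) * T :=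
    (hθ2k.mul_left _).mul_right _
  have hsum : Summable (fun n => ‖rhaly θ x n‖ * Real.exp (-(β n) / k)) :=
    Summable.of_nonneg_of_le (fun n => by positivity) key hg_summable
  refine ⟨hsum, ?_⟩
  calc ∑' n, ‖rhaly θ x n‖ * Real.exp (-(β n) / k)
      ≤ ∑' n, Real.exp (B / m) * (‖θ n‖ * Real.exp (-(β n) / (2 * k : ℕ))) * T :=
        Summable.tsum_le_tsum key hsum hg_summable
    _ = Real.exp (B / m) * S * T := by
        rw [tsum_mul_right, tsum_mul_left]
    _ ≤ Real.exp (B / m) * (S + 1) * T := by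
        gcongr
        linarith
end

section
/- Let α : ℕ → ℝ be nondecreasing with α_n ≥ 0, α_n → ∞, and lim_{n→∞} (log n)/α_n = 0 (i.e. Λ_1(α) is nuclear), and let θ ∈ Λ_1(α). Then the following are equivalent: (i) the Rhaly operator R_θ : Λ_1(α) → Λ_1(α) is compact, in the sense of the Crone–Robinson criterion: there exists m ∈ ℕ such that for every p ∈ ℕ there is D > 0 with ∑_{j=n}^∞ |θ_j| e^{−α_j/p} ≤ D · e^{−α_n/m} for all n ∈ ℕ; (ii) θ belongs to the dual (Λ_1(α))′, i.e. there exist r ∈ ℕ and D > 0 with |θ_n| ≤ D · e^{−α_n/r} for all n ∈ ℕ. -/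
open scoped BigOperators

lemma summable_exp_aux (α : ℕ → ℝ)
    (hα_top : Filter.Tendsto α Filter.atTop Filter.atTop)
    (hα_nuclear : Filter.Tendsto (fun n : ℕ => Real.log n / α n) Filter.atTop (nhds 0))
    (c : ℝ) (hc : 0 < c) :
    Summable fun n : ℕ => Real.exp (-(α n) / c) := by
  have h1 : ∀ᶠ n : ℕ in Filter.atTop, Real.log n / α n < 1 / (2 * c) := by
    have := hα_nuclear.eventually (eventually_lt_nhds (by positivity : (0:ℝ) < 1/(2*c)))
    simpa using this
  have h2 : ∀ᶠ n : ℕ in Filter.atTop, 1 ≤ α n := hα_top.eventually_ge_atTop 1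
  obtain ⟨N, hN⟩ := ((h1.and h2).and (Filter.eventually_ge_atTop 1)).exists_forall_of_atTop
  have key : Summable fun n : ℕ => Real.exp (-(α (n + N)) / c) := by
    apply Summable.of_nonneg_of_le (fun n => (Real.exp_pos _).le)
      (fun n => ?_) ((summable_nat_add_iff N).mpr
        (Real.summable_nat_rpow.mpr (by norm_num : (-2:ℝ) < -1)))
    have h := hN (n + N) (Nat.le_add_left _ _)
    have hpos : (0:ℝ) < (n + N : ℕ) := by
      exact_mod_cast Nat.lt_of_lt_of_le Nat.zero_lt_one h.2
    have hα1 : (1:ℝ) ≤ α (n + N) := h.1.2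
    have hlog : Real.log (n + N : ℕ) < α (n + N) / (2 * c) := by
      have := h.1.1
      rw [div_lt_div_iff₀ (by linarith) (by positivity)] at this
      rw [lt_div_iff₀ (by positivity)]
      linarith
    rw [Real.rpow_def_of_pos hpos]
    apply Real.exp_le_exp.mpr
    have h2c : 2 * Real.log (n + N : ℕ) ≤ α (n + N) / c := by
      rw [le_div_iff₀ hc]
      rw [lt_div_iff₀ (by positivity)] at hlog
      nlinarith
    rw [neg_div]
    linarith
  exact (summable_nat_add_iff N).mp key

/-- For a nuclear power series space of finite type `Λ_1(α)` and
`θ ∈ Λ_1(α)`, the Rhaly operator `R_θ : Λ_1(α) → Λ_1(α)` is compact (Crone–Robinson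
criterion) if and only if `θ` belongs to the dual `(Λ_1(α))'`. -/
theorem rhaly_compact_iff_dual
    (α : ℕ → ℝ) (hα_mono : Monotone α) (hα_nonneg : ∀ n, 0 ≤ α n)
    (hα_top : Filter.Tendsto α Filter.atTop Filter.atTop)
    (hα_nuclear : Filter.Tendsto (fun n : ℕ => Real.log n / α n) Filter.atTop (nhds 0))
    (θ : ℕ → ℂ)
    (hθ : ∀ k : ℕ, 0 < k → Summable fun n => ‖θ n‖ * Real.exp (-(α n) / k)) :
    (∃ m : ℕ, 0 < m ∧ ∀ p : ℕ, 0 < p → ∃ D : ℝ, 0 < D ∧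
        ∀ n, (∑' j : ℕ, if n ≤ j then ‖θ j‖ * Real.exp (-(α j) / p) else 0)
          ≤ D * Real.exp (-(α n) / m))
      ↔ (∃ r : ℕ, 0 < r ∧ ∃ D : ℝ, 0 < D ∧
          ∀ n, ‖θ n‖ ≤ D * Real.exp (-(α n) / r)) := by
  have hsummif : ∀ (p : ℕ), 0 < p → ∀ n : ℕ,
      Summable fun j : ℕ => if n ≤ j then ‖θ j‖ * Real.exp (-(α j) / p) else 0 := by
    intro p hp n
    apply Summable.of_nonneg_of_le (fun j => by positivity) (fun j => ?_) (hθ p hp)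
    split
    · exact le_refl _
    · positivity
  constructor
  · rintro ⟨m, hm, H⟩
    obtain ⟨D, hD, hT⟩ := H (m + 1) (Nat.succ_pos m)
    refine ⟨m * (m + 1), Nat.mul_pos hm (Nat.succ_pos m), D, hD, fun n => ?_⟩
    have hterm : ‖θ n‖ * Real.exp (-(α n) / (m + 1 : ℕ)) ≤ D * Real.exp (-(α n) / m) := by
      calc ‖θ n‖ * Real.exp (-(α n) / (m + 1 : ℕ))
          = (if n ≤ n then ‖θ n‖ * Real.exp (-(α n) / (m + 1 : ℕ)) else 0) := by simp
        _ ≤ ∑' j : ℕ, if n ≤ j then ‖θ j‖ * Real.exp (-(α j) / (m + 1 : ℕ)) else 0 :=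
            Summable.le_tsum (hsummif (m + 1) (Nat.succ_pos m) n) n
              (fun j _ => by split <;> positivity)
        _ ≤ D * Real.exp (-(α n) / m) := hT n
    have hmR : (0:ℝ) < (m : ℝ) := by exact_mod_cast hm
    have hexp : Real.exp (-(α n) / m) =
        Real.exp (-(α n) / (m * (m + 1) : ℕ)) * Real.exp (-(α n) / (m + 1 : ℕ)) := by
      rw [← Real.exp_add]
      congr 1
      push_cast
      field_simp
      ring
    have := hterm
    rw [hexp, ← mul_assoc] at this
    exact le_of_mul_le_mul_right this (Real.exp_pos _)
  · rintro ⟨r, hr, D, hD, hθbound⟩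
    have hrR : (0:ℝ) < (r : ℝ) := by exact_mod_cast hr
    have hS : Summable fun j : ℕ => Real.exp (-(α j) / (2 * r : ℝ)) :=
      summable_exp_aux α hα_top hα_nuclear (2 * r) (by positivity)
    set S := ∑' j : ℕ, Real.exp (-(α j) / (2 * r : ℝ)) with hSdef
    have hSpos : 0 < S := Summable.tsum_pos hS (fun j => (Real.exp_pos _).le) 0 (Real.exp_pos _)
    refine ⟨2 * r, Nat.mul_pos two_pos hr, fun p hp => ?_⟩
    refine ⟨D * S, by positivity, fun n => ?_⟩
    have hcast : ((2 * r : ℕ) : ℝ) = 2 * (r : ℝ) := by push_cast; ring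
    have hbound : ∀ j : ℕ, (if n ≤ j then ‖θ j‖ * Real.exp (-(α j) / p) else 0)
        ≤ (D * Real.exp (-(α n) / (2 * r : ℝ))) * Real.exp (-(α j) / (2 * r : ℝ)) := by
      intro j
      split
      case isTrue hnj =>
        have h1 : ‖θ j‖ * Real.exp (-(α j) / p) ≤ D * Real.exp (-(α j) / r) := by
          have := hθbound j
          have hle : Real.exp (-(α j) / p) ≤ 1 := by
            apply Real.exp_le_one_iff.mpr
            have hpR : (0:ℝ) < (p : ℝ) := by exact_mod_cast hp
            have := hα_nonneg j
            rw [neg_div]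
            simp only [Left.neg_nonpos_iff]
            positivity
          calc ‖θ j‖ * Real.exp (-(α j) / p)
              ≤ (D * Real.exp (-(α j) / r)) * 1 := by
                apply mul_le_mul this hle (Real.exp_pos _).le (by positivity)
            _ = D * Real.exp (-(α j) / r) := by ring
        have h2 : Real.exp (-(α j) / r) =
            Real.exp (-(α j) / (2 * r : ℝ)) * Real.exp (-(α j) / (2 * r : ℝ)) := by
          rw [← Real.exp_add]
          congr 1
          field_simp
          ring
        have h3 : Real.exp (-(α j) / (2 * r : ℝ)) ≤ Real.exp (-(α n) / (2 * r : ℝ)) := by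
          apply Real.exp_le_exp.mpr
          apply div_le_div_of_nonneg_right ?_ (by positivity)
          simp only [neg_le_neg_iff]
          exact hα_mono hnj
        calc ‖θ j‖ * Real.exp (-(α j) / p) ≤ D * Real.exp (-(α j) / r) := h1
          _ = D * (Real.exp (-(α j) / (2 * r : ℝ)) * Real.exp (-(α j) / (2 * r : ℝ))) := by
              rw [h2]
          _ ≤ (D * Real.exp (-(α n) / (2 * r : ℝ))) * Real.exp (-(α j) / (2 * r : ℝ)) := by
              rw [mul_assoc]
              apply mul_le_mul_of_nonneg_left ?_ hD.le
              exact mul_le_mul_of_nonneg_right h3 (Real.exp_pos _).le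
      case isFalse => positivity
    calc (∑' j : ℕ, if n ≤ j then ‖θ j‖ * Real.exp (-(α j) / p) else 0)
        ≤ ∑' j : ℕ, (D * Real.exp (-(α n) / (2 * r : ℝ))) * Real.exp (-(α j) / (2 * r : ℝ)) :=
          Summable.tsum_le_tsum hbound (hsummif p hp n) (hS.mul_left _)
      _ = (D * Real.exp (-(α n) / (2 * r : ℝ))) * S := tsum_mul_left
      _ = D * S * Real.exp (-(α n) / ((2 * r : ℕ) : ℝ)) := by rw [hcast]; ring
end

section
/- Let f, g : ℂ → ℂ and let a, b : ℕ → ℂ be sequences such that for every z ∈ ℂ the series ∑_{n=0}^∞ a_n z^n converges to f(z) and ∑_{n=0}^∞ b_n z^n converges to g(z) (so f and g are entire). Fix r₀ with 0 < r₀ < 1. Then for every z ∈ ℂ the series ∑_{n=0}^∞ (∑_{k=0}^n a_k) · b_n · z^n converges, and its sum equals (1/(2πi)) ∮_{|w|=r₀} f(w)/(w(1−w)) · g(z/w) dw, where the integral is the counterclockwise circle integral over the circle of radius r₀ centered at 0. -/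
/-!
On the circle `|w| = r₀ < 1` both `f w / (1 - w) = ∑ₘ (∑_{k ≤ m} aₖ) wᵐ` and
`g (z / w) = ∑ₙ bₙ zⁿ w⁻ⁿ` converge absolutely with constant majorants, so their product may be
integrated term by term over the circle. Since `∮ w ^ (m - n - 1) dw = 2πi δₘₙ`, only the diagonal
terms `(∑_{k ≤ n} aₖ) bₙ zⁿ` survive.
-/

open Finset Metric

section PowerSeries

variable {𝕜 : Type*}

theorem summable_norm_mul_pow_of_summable [NormedField 𝕜] {a : ℕ → 𝕜} {t w : 𝕜}
    (hwt : ‖w‖ < ‖t‖) (h : Summable fun n => a n * t ^ n) :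
    Summable fun n => ‖a n * w ^ n‖ := by
  have ht : 0 < ‖t‖ := (norm_nonneg w).trans_lt hwt
  obtain ⟨C, hC⟩ := h.tendsto_atTop_zero.norm.bddAbove_range
  refine Summable.of_nonneg_of_le (fun _ => norm_nonneg _) (fun n => ?_)
    ((summable_geometric_of_lt_one (by positivity) ((div_lt_one ht).2 hwt)).mul_left C)
  calc ‖a n * w ^ n‖ = ‖a n * t ^ n‖ * (‖w‖ / ‖t‖) ^ n := by
        rw [norm_mul, norm_mul, norm_pow, norm_pow, div_pow, mul_assoc,
          mul_div_cancel₀ _ (pow_ne_zero n ht.ne')]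
    _ ≤ C * (‖w‖ / ‖t‖) ^ n := by gcongr; exact hC ⟨n, rfl⟩

theorem summable_norm_mul_pow_of_forall_summable [NontriviallyNormedField 𝕜] {a : ℕ → 𝕜}
    (h : ∀ t : 𝕜, Summable fun n => a n * t ^ n) (w : 𝕜) :
    Summable fun n => ‖a n * w ^ n‖ :=
  have ⟨t, hwt⟩ := NormedField.exists_lt_norm 𝕜 ‖w‖
  summable_norm_mul_pow_of_summable hwt (h t)

variable [NormedField 𝕜] {a : ℕ → 𝕜} {w : 𝕜}

theorem sum_range_mul_pow_mul_pow_sub (a : ℕ → 𝕜) (w : 𝕜) (m : ℕ) :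
    ∑ k ∈ range (m + 1), a k * w ^ k * w ^ (m - k) = (∑ k ∈ range (m + 1), a k) * w ^ m := by
  rw [sum_mul]
  refine sum_congr rfl fun k hk => ?_
  rw [mul_assoc, ← pow_add, Nat.add_sub_cancel' (Nat.lt_succ_iff.1 (mem_range.1 hk))]

theorem summable_norm_partialSum_mul_pow (hw : ‖w‖ < 1)
    (ha : Summable fun n => ‖a n * w ^ n‖) :
    Summable fun m => ‖(∑ k ∈ range (m + 1), a k) * w ^ m‖ := by
  simpa only [sum_range_mul_pow_mul_pow_sub] using
    summable_norm_sum_mul_range_of_summable_norm ha (summable_norm_geometric_of_norm_lt_one hw)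

theorem hasSum_partialSum_mul_pow [CompleteSpace 𝕜] (hw : ‖w‖ < 1)
    (ha : Summable fun n => ‖a n * w ^ n‖) :
    HasSum (fun m => (∑ k ∈ range (m + 1), a k) * w ^ m) ((∑' n, a n * w ^ n) / (1 - w)) := by
  simpa only [sum_range_mul_pow_mul_pow_sub, tsum_geometric_of_norm_lt_one hw, div_eq_mul_inv]
    using hasSum_sum_range_mul_of_summable_norm ha (summable_norm_geometric_of_norm_lt_one hw)

end PowerSeries

theorem hasSum_circleIntegral_of_summable_bound {ι E : Type*} [Countable ι]
    [NormedAddCommGroup E] [NormedSpace ℂ E] {F : ι → ℂ → E} {G : ℂ → E} {c : ℂ} {R : ℝ}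
    (hR : 0 ≤ R) (bound : ι → ℝ) (hF : ∀ i, CircleIntegrable (F i) c R)
    (h_bound : ∀ i, ∀ w ∈ sphere c R, ‖F i w‖ ≤ bound i) (h_sum : Summable bound)
    (h_lim : ∀ w ∈ sphere c R, HasSum (fun i => F i w) (G w)) :
    HasSum (fun i => ∮ w in C(c, R), F i w) (∮ w in C(c, R), G w) := by
  refine intervalIntegral.hasSum_integral_of_dominated_convergence (fun i _ => R * bound i)
    (fun i => (hF i).out.def'.aestronglyMeasurable) (fun i => ?_)
    (.of_forall fun _ _ => h_sum.mul_left R) intervalIntegrable_const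
    (.of_forall fun θ _ => (h_lim _ (circleMap_mem_sphere c hR θ)).const_smul _)
  refine .of_forall fun θ _ => ?_
  rw [norm_smul, deriv_circleMap, norm_mul, norm_circleMap_zero, Complex.norm_I, mul_one,
    abs_of_nonneg hR]
  exact mul_le_mul_of_nonneg_left (h_bound i _ (circleMap_mem_sphere c hR θ)) hR

theorem circleIntegral_zpow_of_ne {k : ℤ} (hk : k ≠ -1) (R : ℝ) :
    ∮ w in C(0, R), w ^ k = 0 := by
  simpa using circleIntegral.integral_sub_zpow_of_ne hk 0 0 R

theorem circleIntegral_inv {R : ℝ} (hR : 0 < R) :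
    ∮ w in C(0, R), w⁻¹ = 2 * Real.pi * Complex.I := by
  simpa using circleIntegral.integral_sub_inv_of_mem_ball (c := 0) (w := 0) (mem_ball_self hR)

theorem zpow_natCast_sub_natCast_sub_one {G₀ : Type*} [GroupWithZero G₀]
    {w : G₀} (hw : w ≠ 0) (m n : ℕ) : w ^ ((m : ℤ) - n - 1) = w ^ m / w ^ n / w := by
  rw [zpow_sub₀ hw, zpow_sub₀ hw, zpow_one, zpow_natCast, zpow_natCast]

theorem hasSum_mul_mul_zpow_natCast_sub_natCast_sub_one {𝕜 : Type*} [NormedField 𝕜]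
    [CompleteSpace 𝕜] {u v : ℕ → 𝕜} {w : 𝕜} (hw : w ≠ 0) (hu : Summable fun m => ‖u m * w ^ m‖)
    (hv : Summable fun n => ‖v n / w ^ n‖) :
    HasSum (fun p : ℕ × ℕ => u p.1 * v p.2 * w ^ ((p.1 : ℤ) - p.2 - 1))
      ((∑' m, u m * w ^ m) * (∑' n, v n / w ^ n) / w) := by
  have hterm : (fun p : ℕ × ℕ => u p.1 * v p.2 * w ^ ((p.1 : ℤ) - p.2 - 1)) =
      fun p => u p.1 * w ^ p.1 * (v p.2 / w ^ p.2) / w := by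
    funext p
    rw [zpow_natCast_sub_natCast_sub_one hw]
    ring
  rw [hterm]
  exact (hu.of_norm.hasSum.mul hv.of_norm.hasSum (summable_mul_of_summable_norm
    (f := fun m => u m * w ^ m) (g := fun n => v n / w ^ n) hu hv)).div_const w

theorem hasSum_mul_circleIntegral_tsum_mul_tsum {u v : ℕ → ℂ} {r : ℝ} (hr : 0 < r)
    (hu : Summable fun m => ‖u m‖ * r ^ m) (hv : Summable fun n => ‖v n‖ / r ^ n) :
    HasSum (fun n => u n * v n) ((2 * Real.pi * Complex.I)⁻¹ *
      ∮ w in C(0, r), (∑' m, u m * w ^ m) * (∑' n, v n / w ^ n) / w) := by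
  set F : ℕ × ℕ → ℂ → ℂ := fun p w => u p.1 * v p.2 * w ^ ((p.1 : ℤ) - p.2 - 1) with hF
  have hne : ∀ w ∈ sphere (0 : ℂ) r, w ≠ 0 := fun w hw => ne_of_mem_sphere hw hr.ne'
  have hsum : HasSum (fun p => ∮ w in C(0, r), F p w)
      (∮ w in C(0, r), (∑' m, u m * w ^ m) * (∑' n, v n / w ^ n) / w) := by
    refine hasSum_circleIntegral_of_summable_bound hr.le
      (fun p => ‖u p.1‖ * r ^ p.1 * (‖v p.2‖ / r ^ p.2) / r)
      (fun p => (continuousOn_const.mul (continuousOn_id.zpow₀ _ fun w hw =>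
        .inl (hne w hw))).circleIntegrable hr.le) (fun p w hw => le_of_eq ?_)
      ((hu.mul_of_nonneg hv (fun _ => by positivity) fun _ => by positivity).div_const r)
      fun w hw => ?_
    · rw [mem_sphere_zero_iff_norm] at hw
      rw [hF, norm_mul, norm_mul, norm_zpow, hw, zpow_natCast_sub_natCast_sub_one hr.ne']
      ring
    · have hnorm : ‖w‖ = r := mem_sphere_zero_iff_norm.1 hw
      exact hasSum_mul_mul_zpow_natCast_sub_natCast_sub_one (hne w hw)
        (by simpa only [norm_mul, norm_pow, hnorm] using hu)
        (by simpa only [norm_div, norm_pow, hnorm] using hv)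
  have hoff : ∀ p ∉ Set.range (fun n : ℕ => (n, n)), ∮ w in C(0, r), F p w = 0 := by
    rintro ⟨m, n⟩ hmn
    have : m ≠ n := fun h => hmn ⟨m, by rw [h]⟩
    rw [hF, circleIntegral.integral_const_mul, circleIntegral_zpow_of_ne (by omega), mul_zero]
  have hdiag : ∀ n : ℕ, ∮ w in C(0, r), F (n, n) w = 2 * Real.pi * Complex.I * (u n * v n) := by
    intro n
    simp only [hF, sub_self, zero_sub, zpow_neg_one]
    rw [circleIntegral.integral_const_mul, circleIntegral_inv hr, mul_comm]
  have hinj : Function.Injective (fun n : ℕ => (n, n)) := fun m n h => congrArg Prod.fst h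
  have := ((hinj.hasSum_iff hoff).2 hsum).mul_left (2 * Real.pi * Complex.I)⁻¹
  simpa only [Function.comp_def, hdiag, inv_mul_cancel_left₀ Complex.two_pi_I_ne_zero] using this

/-- Integral representation of the Rhaly operator on `H(ℂ)`: if
`f(z) = ∑ aₙ zⁿ` and `g(z) = ∑ bₙ zⁿ` are entire and `0 < r₀ < 1`, then for every `z ∈ ℂ`
`∑ₙ (∑_{k≤n} aₖ) bₙ zⁿ = (2πi)⁻¹ ∮_{|w|=r₀} f(w)/(w(1-w)) · g(z/w) dw`. -/
theorem rhaly_integral_representation_entire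
    (f g : ℂ → ℂ) (a b : ℕ → ℂ)
    (hf : ∀ z : ℂ, HasSum (fun n : ℕ => a n * z ^ n) (f z))
    (hg : ∀ z : ℂ, HasSum (fun n : ℕ => b n * z ^ n) (g z))
    (r₀ : ℝ) (hr₀ : 0 < r₀) (hr₁ : r₀ < 1) (z : ℂ) :
    HasSum (fun n : ℕ => (∑ k ∈ Finset.range (n + 1), a k) * b n * z ^ n)
      ((2 * (Real.pi : ℂ) * Complex.I)⁻¹ *
        ∮ w in C(0, r₀), f w / (w * (1 - w)) * g (z / w)) := by
  have ha := summable_norm_mul_pow_of_forall_summable fun t => (hf t).summable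
  have hb := summable_norm_mul_pow_of_forall_summable fun t => (hg t).summable
  have hc : Summable fun m => ‖∑ k ∈ range (m + 1), a k‖ * r₀ ^ m := by
    simpa only [norm_mul, norm_pow, Complex.norm_real, Real.norm_of_nonneg hr₀.le] using
      summable_norm_partialSum_mul_pow (by simpa [abs_of_pos hr₀]) (ha r₀)
  have hbz : Summable fun n => ‖b n * z ^ n‖ / r₀ ^ n := by
    simpa only [norm_mul, norm_pow, norm_div, Complex.norm_real, Real.norm_of_nonneg hr₀.le,
      div_pow, mul_div_assoc] using hb (z / r₀)
  convert hasSum_mul_circleIntegral_tsum_mul_tsum hr₀ hc hbz using 1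
  · simp only [mul_assoc]
  refine congrArg _ (circleIntegral.integral_congr hr₀.le fun w hw => ?_)
  have hw' : ‖w‖ < 1 := (mem_sphere_zero_iff_norm.1 hw).trans_lt hr₁
  have hgw : ∑' n, b n * z ^ n / w ^ n = g (z / w) := by
    simp_rw [mul_div_assoc, ← div_pow]
    exact (hg _).tsum_eq
  rw [(hasSum_partialSum_mul_pow hw' (ha w)).tsum_eq, (hf w).tsum_eq, hgw, div_mul_eq_div_div_swap]
  ring
end

section
/- Let θ : ℕ → ℂ be any sequence and let R_θ be the Rhaly map on complex sequences. Then for every k ≥ 1 and every n, the k-th iterate satisfies: (R_θ^k e_n)_m = 0 for m < n, and for m ≥ n, (R_θ^k e_n)_m = ∑ θ_{j₁} θ_{j₂} ⋯ θ_{j_k}, the sum extending over all nondecreasing tuples n ≤ j₁ ≤ j₂ ≤ ⋯ ≤ j_k = m. Consequently |(R_θ^k e_n)_m| ≤ (∑_{j=n}^m |θ_j|)^k for all m ≥ n. -/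
open scoped BigOperators

/-- The `n`-th unit coordinate sequence. -/
noncomputable def unitSeq (n : ℕ) : ℕ → ℂ := fun m => if m = n then 1 else 0

lemma rhaly_iter_vanish (θ : ℕ → ℂ) (n : ℕ) : ∀ (k : ℕ), ∀ m, m < n →
    (rhaly θ)^[k] (unitSeq n) m = 0 := by
  intro k
  induction k with
  | zero => intro m hm; simp [unitSeq, Nat.ne_of_lt hm]
  | succ k ih =>
    intro m hm
    rw [Function.iterate_succ_apply']
    simp only [rhaly]
    have h : ∀ j ∈ Finset.range (m + 1), (rhaly θ)^[k] (unitSeq n) j = 0 := by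
      intro j hj
      exact ih j (by simp only [Finset.mem_range] at hj; omega)
    rw [Finset.sum_eq_zero h, zero_mul]

lemma rhaly_iter_succ (θ : ℕ → ℂ) (n k m : ℕ) (hm : n ≤ m) :
    (rhaly θ)^[k+1] (unitSeq n) m
      = (∑ j ∈ Finset.Icc n m, (rhaly θ)^[k] (unitSeq n) j) * θ m := by
  rw [Function.iterate_succ_apply']
  simp only [rhaly]
  congr 1
  symm
  apply Finset.sum_subset
  · intro j hj
    simp only [Finset.mem_Icc] at hj
    simp only [Finset.mem_range]; omega
  · intro j hjr hj
    apply rhaly_iter_vanish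
    simp only [Finset.mem_Icc] at hj
    simp only [Finset.mem_range] at hjr
    omega

/-- The index set of nondecreasing tuples in `[n,m]` ending at `m`. -/
noncomputable def Tset (k n m : ℕ) : Finset (Fin (k+1) → ℕ) :=
  (Fintype.piFinset fun _ : Fin (k+1) => Finset.Icc n m).filter
    (fun J => (∀ i j : Fin (k+1), i ≤ j → J i ≤ J j) ∧ J ⟨k, Nat.lt_succ_self k⟩ = m)

lemma rhaly_formula (θ : ℕ → ℂ) (n : ℕ) : ∀ k, ∀ m, n ≤ m →
    (rhaly θ)^[k+1] (unitSeq n) m = ∑ J ∈ Tset k n m, ∏ i : Fin (k+1), θ (J i) := by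
  intro k
  induction k with
  | zero =>
    intro m hm
    rw [rhaly_iter_succ θ n 0 m hm]
    have h1 : (∑ j ∈ Finset.Icc n m, (rhaly θ)^[0] (unitSeq n) j) = 1 := by
      simp only [Function.iterate_zero_apply, unitSeq]
      rw [Finset.sum_ite_eq' (Finset.Icc n m) n (fun _ => (1 : ℂ))]
      simp [hm]
    rw [h1, one_mul]
    have h2 : Tset 0 n m = {fun _ : Fin 1 => m} := by
      ext J
      simp only [Tset, Finset.mem_filter, Fintype.mem_piFinset, Finset.mem_Icc,
        Finset.mem_singleton]
      constructor
      · rintro ⟨_, _, hlast⟩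
        funext i
        have : i = ⟨0, Nat.lt_succ_self 0⟩ := Fin.ext (Nat.lt_one_iff.mp i.isLt)
        rw [this]; exact hlast
      · rintro rfl
        exact ⟨fun i => ⟨hm, le_refl m⟩, fun i j _ => le_refl m, rfl⟩
    rw [h2, Finset.sum_singleton]
    simp
  | succ k ih =>
    intro m hm
    rw [rhaly_iter_succ θ n (k+1) m hm]
    rw [Finset.sum_congr rfl (fun j hj => ih j (Finset.mem_Icc.mp hj).1), Finset.sum_mul]
    simp_rw [Finset.sum_mul]
    rw [Finset.sum_sigma']
    refine Finset.sum_nbij' (i := fun p => Fin.snoc p.2 m)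
      (j := fun J => ⟨J ⟨k, by omega⟩, fun i => J i.castSucc⟩) ?_ ?_ ?_ ?_ ?_
    · rintro ⟨j, J'⟩ hp
      simp only [Finset.mem_sigma, Tset, Finset.mem_filter, Fintype.mem_piFinset,
        Finset.mem_Icc] at hp
      obtain ⟨⟨hnj, hjm⟩, hmem, hmono, hlast⟩ := hp
      simp only [Tset, Finset.mem_filter, Fintype.mem_piFinset, Finset.mem_Icc]
      refine ⟨?_, ?_, ?_⟩
      · intro i
        refine Fin.lastCases ?_ ?_ i
        · simp [Fin.snoc_last]; omega
        · intro i
          rw [Fin.snoc_castSucc]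
          exact ⟨(hmem i).1, le_trans (hmem i).2 hjm⟩
      · intro i i' hii'
        rcases Fin.eq_castSucc_or_eq_last i' with ⟨i'0, rfl⟩ | rfl
        · rcases Fin.eq_castSucc_or_eq_last i with ⟨i0, rfl⟩ | rfl
          · rw [Fin.snoc_castSucc, Fin.snoc_castSucc]
            exact hmono i0 i'0 (by simpa using hii')
          · exact absurd (le_antisymm (Fin.le_last _) hii') (Fin.castSucc_lt_last i'0).ne
        · rw [Fin.snoc_last]
          rcases Fin.eq_castSucc_or_eq_last i with ⟨i0, rfl⟩ | rfl
          · rw [Fin.snoc_castSucc]; exact le_trans (hmem i0).2 hjm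
          · rw [Fin.snoc_last]
      · have : (⟨k+1, Nat.lt_succ_self (k+1)⟩ : Fin (k+2)) = Fin.last (k+1) := rfl
        rw [this, Fin.snoc_last]
    · intro J hJ
      simp only [Tset, Finset.mem_filter, Fintype.mem_piFinset, Finset.mem_Icc] at hJ
      obtain ⟨hmem, hmono, hlast⟩ := hJ
      simp only [Finset.mem_sigma, Tset, Finset.mem_filter, Fintype.mem_piFinset,
        Finset.mem_Icc]
      have hkm : J ⟨k, by omega⟩ ≤ m := by
        rw [← hlast]
        exact hmono _ _ (by simp [Fin.le_def])
      refine ⟨⟨(hmem _).1, hkm⟩, ?_, ?_, ?_⟩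
      · intro i
        refine ⟨(hmem _).1, ?_⟩
        have hik : (i : ℕ) ≤ k := Fin.is_le i
        have : (i.castSucc : Fin (k+2)) ≤ ⟨k, by omega⟩ := by
          simp only [Fin.le_def, Fin.coe_castSucc]; exact hik
        exact hmono _ _ this
      · intro i j hij
        exact hmono _ _ (by simpa using hij)
      · rfl
    · rintro ⟨j, J'⟩ hp
      simp only [Finset.mem_sigma, Tset, Finset.mem_filter, Fintype.mem_piFinset,
        Finset.mem_Icc] at hp
      obtain ⟨⟨hnj, hjm⟩, hmem, hmono, hlast⟩ := hp
      refine Sigma.ext ?_ ?_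
      · simp only
        have : ((⟨k, by omega⟩ : Fin (k+2))) = (⟨k, Nat.lt_succ_self k⟩ : Fin (k+1)).castSucc := rfl
        rw [this, Fin.snoc_castSucc, hlast]
      · simp only
        refine heq_of_eq (funext fun i => ?_)
        rw [Fin.snoc_castSucc]
    · intro J hJ
      simp only [Tset, Finset.mem_filter, Fintype.mem_piFinset, Finset.mem_Icc] at hJ
      obtain ⟨hmem, hmono, hlast⟩ := hJ
      funext i
      refine Fin.lastCases ?_ (fun i => ?_) i
      · simp only [Fin.snoc_last, ← hlast]; rfl
      · simp only [Fin.snoc_castSucc]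
    · rintro ⟨j, J'⟩ hp
      simp only
      conv_rhs => rw [Fin.prod_univ_castSucc]
      simp [Fin.snoc_castSucc, Fin.snoc_last]

lemma rhaly_norm_sum (θ : ℕ → ℂ) (n : ℕ) : ∀ k, ∀ m, n ≤ m →
    ∑ j ∈ Finset.Icc n m, ‖(rhaly θ)^[k] (unitSeq n) j‖
      ≤ (∑ j ∈ Finset.Icc n m, ‖θ j‖) ^ k := by
  intro k
  induction k with
  | zero =>
    intro m hm
    simp only [Function.iterate_zero_apply, unitSeq, pow_zero]
    have : ∀ j, ‖(if j = n then (1:ℂ) else 0)‖ = if j = n then (1:ℝ) else 0 := by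
      intro j; split <;> simp
    simp_rw [this]
    rw [Finset.sum_ite_eq' (Finset.Icc n m) n (fun _ => (1 : ℝ))]
    simp [hm]
  | succ k ih =>
    intro m hm
    have hS : (0:ℝ) ≤ ∑ j ∈ Finset.Icc n m, ‖θ j‖ :=
      Finset.sum_nonneg fun _ _ => norm_nonneg _
    calc ∑ j ∈ Finset.Icc n m, ‖(rhaly θ)^[k+1] (unitSeq n) j‖
        ≤ ∑ j ∈ Finset.Icc n m, (∑ i ∈ Finset.Icc n m, ‖θ i‖) ^ k * ‖θ j‖ := by
          apply Finset.sum_le_sum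
          intro j hj
          obtain ⟨hnj, hjm⟩ := Finset.mem_Icc.mp hj
          rw [rhaly_iter_succ θ n k j hnj, norm_mul]
          apply mul_le_mul_of_nonneg_right _ (norm_nonneg _)
          calc ‖∑ i ∈ Finset.Icc n j, (rhaly θ)^[k] (unitSeq n) i‖
              ≤ ∑ i ∈ Finset.Icc n j, ‖(rhaly θ)^[k] (unitSeq n) i‖ := norm_sum_le _ _
            _ ≤ (∑ i ∈ Finset.Icc n j, ‖θ i‖) ^ k := ih j hnj
            _ ≤ (∑ i ∈ Finset.Icc n m, ‖θ i‖) ^ k := by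
                apply pow_le_pow_left₀ (Finset.sum_nonneg fun _ _ => norm_nonneg _)
                exact Finset.sum_le_sum_of_subset_of_nonneg
                  (Finset.Icc_subset_Icc_right hjm) (fun _ _ _ => norm_nonneg _)
      _ = (∑ j ∈ Finset.Icc n m, ‖θ j‖) ^ (k+1) := by
          rw [← Finset.mul_sum, pow_succ]

/-- The entries of the iterates of the Rhaly map on the unit vectors:
`(R_θ^k e_n)_m = 0` for `m < n`, while for `m ≥ n` it equals the sum, over all
nondecreasing tuples `n ≤ j₁ ≤ ⋯ ≤ j_k = m`, of `θ_{j₁} ⋯ θ_{j_k}`; consequently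
`|(R_θ^k e_n)_m| ≤ (∑_{j=n}^m |θ_j|)^k`. -/
theorem rhaly_iterate_entries (θ : ℕ → ℂ) (k : ℕ) (hk : 1 ≤ k) (n : ℕ) :
    (∀ m, m < n → (rhaly θ)^[k] (unitSeq n) m = 0) ∧
    (∀ m, n ≤ m →
      (rhaly θ)^[k] (unitSeq n) m =
        ∑ J ∈ (Fintype.piFinset fun _ : Fin k => Finset.Icc n m).filter
            (fun J => (∀ i j : Fin k, i ≤ j → J i ≤ J j) ∧ J ⟨k - 1, by omega⟩ = m),
          ∏ i : Fin k, θ (J i)) ∧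
    (∀ m, n ≤ m →
      ‖(rhaly θ)^[k] (unitSeq n) m‖ ≤ (∑ j ∈ Finset.Icc n m, ‖θ j‖) ^ k) := by
  obtain ⟨k, rfl⟩ : ∃ k', k = k' + 1 := ⟨k - 1, by omega⟩
  refine ⟨rhaly_iter_vanish θ n (k+1), ?_, ?_⟩
  · intro m hm
    exact rhaly_formula θ n k m hm
  · intro m hm
    have hS : (0:ℝ) ≤ ∑ j ∈ Finset.Icc n m, ‖θ j‖ :=
      Finset.sum_nonneg fun _ _ => norm_nonneg _
    rw [rhaly_iter_succ θ n k m hm, norm_mul, pow_succ]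
    apply mul_le_mul
    · calc ‖∑ j ∈ Finset.Icc n m, (rhaly θ)^[k] (unitSeq n) j‖
          ≤ ∑ j ∈ Finset.Icc n m, ‖(rhaly θ)^[k] (unitSeq n) j‖ := norm_sum_le _ _
        _ ≤ _ := rhaly_norm_sum θ n k m hm
    · exact Finset.single_le_sum (fun _ _ => norm_nonneg _) (Finset.mem_Icc.mpr ⟨hm, le_refl m⟩)
    · exact norm_nonneg _
    · positivity
end

section
/- Let α : ℕ → ℝ be nondecreasing with α_n ≥ 0 and α_n → ∞, and let θ ∈ Λ_1(α), with ‖θ‖_q := ∑_{j=1}^∞ |θ_j| e^{−α_j/q} for q ∈ ℕ. Then for all p, k, n ∈ ℕ (k ≥ 1): sup_{m≥n} |(R_θ^k e_n)_m| · e^{−α_m/p} ≤ e^{−α_n/(3p)} · (‖θ‖_{3pk})^k. In particular, for every p and k there is a constant M_{k,p} = (‖θ‖_{3pk})^k such that sup_m |(R_θ^k e_n)_m| e^{−α_m/p} ≤ M_{k,p} · e^{−α_n/(3p)} for all n, i.e. R_θ is topologizable on Λ_1(α) with respect to the sup-seminorms. -/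
/-!
Write `|θ_l| = u_l w_l` with `u_l = e^{α_l/q}` nondecreasing and `w` summable with sum `S = ‖θ‖_q`.
Since `u` is nondecreasing, a partial sum `∑_{l ≤ m} u_l^{j+1} w_l` is at most `u_m^{j+1} S`, so by
induction `|(R_θ^{j+1} e_n)_m| ≤ (u_m S)^j |θ_m|`. For `q = 3pk` the weight `u_m^{k-1} e^{-α_m/p}`
equals `e^{-α_m/q} e^{-2α_m/(3p)}`, and `R_θ^k e_n` is supported on `m ≥ n`, where
`e^{-2α_m/(3p)} ≤ e^{-α_n/(3p)}`.
-/

open scoped BigOperators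

open Real

lemma iterate_rhaly_unitSeq_of_lt (θ : ℕ → ℂ) {n m : ℕ} (hmn : m < n) (j : ℕ) :
    (rhaly θ)^[j] (unitSeq n) m = 0 := by
  induction j generalizing m with
  | zero => simp [unitSeq, hmn.ne]
  | succ j ih =>
    rw [Function.iterate_succ_apply', rhaly, Finset.sum_eq_zero, zero_mul]
    intro l hl
    exact ih (lt_of_le_of_lt (Nat.lt_succ_iff.mp (Finset.mem_range.mp hl)) hmn)

lemma norm_rhaly_le {θ x : ℕ → ℂ} {g w : ℕ → ℝ} (hg : Monotone g) (hw0 : 0 ≤ w)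
    (hw : Summable w) (hx : ∀ l, ‖x l‖ ≤ g l * w l) (m : ℕ) (hgm : 0 ≤ g m) :
    ‖rhaly θ x m‖ ≤ g m * (∑' l, w l) * ‖θ m‖ := by
  have hpartial : ‖∑ l ∈ Finset.range (m + 1), x l‖ ≤ ∑ l ∈ Finset.range (m + 1), g m * w l := by
    refine norm_sum_le_of_le _ fun l hl => (hx l).trans ?_
    gcongr
    · exact hw0 l
    · exact hg (Nat.lt_succ_iff.mp (Finset.mem_range.mp hl))
  calc ‖rhaly θ x m‖ = ‖∑ l ∈ Finset.range (m + 1), x l‖ * ‖θ m‖ := norm_mul _ _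
    _ ≤ (g m * ∑ l ∈ Finset.range (m + 1), w l) * ‖θ m‖ := by
      rw [Finset.mul_sum]
      exact mul_le_mul_of_nonneg_right hpartial (norm_nonneg _)
    _ ≤ g m * (∑' l, w l) * ‖θ m‖ := by
      gcongr
      exact hw.sum_le_tsum _ fun l _ => hw0 l

lemma norm_iterate_rhaly_unitSeq_le {θ : ℕ → ℂ} {u : ℕ → ℝ} (hu : Monotone u)
    (hu0 : ∀ l, 0 < u l) (hθ : Summable fun l => ‖θ l‖ / u l) (n j m : ℕ) :
    ‖(rhaly θ)^[j + 1] (unitSeq n) m‖ ≤ (u m * ∑' l, ‖θ l‖ / u l) ^ j * ‖θ m‖ := by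
  set S := ∑' l, ‖θ l‖ / u l
  have hS : 0 ≤ S := tsum_nonneg fun l => div_nonneg (norm_nonneg _) (hu0 l).le
  induction j generalizing m with
  | zero =>
    rw [Function.iterate_one, rhaly, norm_mul, pow_zero, one_mul]
    refine mul_le_of_le_one_left (norm_nonneg _) ?_
    simp only [unitSeq, Finset.sum_ite_eq', Finset.mem_range]
    split_ifs <;> simp
  | succ j ih =>
    have hstep := norm_rhaly_le (θ := θ) (g := fun l => u l ^ (j + 1) * S ^ j)
      (fun a b hab => by dsimp only; have := (hu0 a).le; gcongr; exact hu hab)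
      (fun l => div_nonneg (norm_nonneg _) (hu0 l).le) hθ
      (fun l => (ih l).trans_eq (by field_simp [(hu0 l).ne']; ring)) m
      (by have := (hu0 m).le; positivity)
    rw [Function.iterate_succ_apply']
    exact hstep.trans_eq (by ring)

lemma exp_div_pow_mul_exp_neg_div_le {a b : ℝ} (hb : 0 ≤ b) (hba : b ≤ a) {p : ℕ} (hp : 0 < p)
    (K : ℕ) :
    exp (a / (3 * p * ↑(K + 1))) ^ K * exp (-a / p)
      ≤ exp (-a / (3 * p * ↑(K + 1))) * exp (-b / (3 * p)) := by
  have hsplit : exp (a / (3 * p * ↑(K + 1))) ^ K * exp (-a / p)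
      = exp (-a / (3 * p * ↑(K + 1))) * exp (-(2 * a) / (3 * p)) := by
    rw [← exp_nat_mul, ← exp_add, ← exp_add]
    congr 1
    push_cast
    field_simp
    ring
  rw [hsplit]
  gcongr
  linarith

theorem rhaly_topologizable_powerSeriesFinite_general
    (α : ℕ → ℝ) (hα_mono : Monotone α) (hα_nonneg : ∀ n, 0 ≤ α n)
    (θ : ℕ → ℂ)
    (hθ : ∀ q : ℕ, 0 < q → Summable fun j => ‖θ j‖ * Real.exp (-(α j) / q))
    (p k : ℕ) (hp : 0 < p) (hk : 1 ≤ k) (n m : ℕ) :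
    ‖(rhaly θ)^[k] (unitSeq n) m‖ * Real.exp (-(α m) / p)
      ≤ Real.exp (-(α n) / (3 * p)) *
          (∑' j : ℕ, ‖θ j‖ * Real.exp (-(α j) / (3 * p * k))) ^ k := by
  obtain ⟨K, rfl⟩ : ∃ K, k = K + 1 := ⟨k - 1, by omega⟩
  rcases lt_or_ge m n with hmn | hnm
  · rw [iterate_rhaly_unitSeq_of_lt θ hmn, norm_zero, zero_mul]
    positivity
  set q : ℝ := 3 * p * ↑(K + 1)
  set S := ∑' j : ℕ, ‖θ j‖ * exp (-(α j) / q)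
  have hθq : Summable fun j => ‖θ j‖ * exp (-(α j) / q) := by
    simpa [q] using hθ (3 * p * (K + 1)) (by positivity)
  have hdiv : (fun l => ‖θ l‖ / exp (α l / q)) = fun l => ‖θ l‖ * exp (-(α l) / q) := by
    ext l
    rw [neg_div, exp_neg, div_eq_mul_inv]
  have hbound := norm_iterate_rhaly_unitSeq_le (u := fun l => exp (α l / q))
    (fun a b hab => exp_le_exp.mpr (by gcongr; exact hα_mono hab)) (fun l => exp_pos _)
    (hdiv ▸ hθq) n K m
  rw [hdiv] at hbound
  calc ‖(rhaly θ)^[K + 1] (unitSeq n) m‖ * exp (-(α m) / p)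
      ≤ (exp (α m / q) * S) ^ K * ‖θ m‖ * exp (-(α m) / p) := by gcongr
    _ = S ^ K * ‖θ m‖ * (exp (α m / q) ^ K * exp (-(α m) / p)) := by ring
    _ ≤ S ^ K * ‖θ m‖ * (exp (-(α m) / q) * exp (-(α n) / (3 * p))) :=
      mul_le_mul_of_nonneg_left
        (exp_div_pow_mul_exp_neg_div_le (hα_nonneg n) (hα_mono hnm) hp K) (by positivity)
    _ ≤ S ^ K * S * exp (-(α n) / (3 * p)) := by
      rw [← mul_assoc, mul_assoc (S ^ K)]
      gcongr
      exact hθq.le_tsum m fun j _ => by positivity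
    _ = exp (-(α n) / (3 * p)) * S ^ (K + 1) := by ring

/-- For `θ ∈ Λ_1(α)` the iterates of the Rhaly operator satisfy, with
respect to the sup-seminorms,
`sup_m |(R_θ^k e_n)_m| e^{-α_m/p} ≤ e^{-α_n/(3p)} · (‖θ‖_{3pk})^k`,
i.e. `R_θ` is topologizable on `Λ_1(α)` with constants `M_{k,p} = (‖θ‖_{3pk})^k`. -/
theorem rhaly_topologizable_powerSeriesFinite
    (α : ℕ → ℝ) (hα_mono : Monotone α) (hα_nonneg : ∀ n, 0 ≤ α n)
    (hα_top : Filter.Tendsto α Filter.atTop Filter.atTop)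
    (θ : ℕ → ℂ)
    (hθ : ∀ q : ℕ, 0 < q → Summable fun j => ‖θ j‖ * Real.exp (-(α j) / q))
    (p k : ℕ) (hp : 0 < p) (hk : 1 ≤ k) (n m : ℕ) :
    ‖(rhaly θ)^[k] (unitSeq n) m‖ * Real.exp (-(α m) / p)
      ≤ Real.exp (-(α n) / (3 * p)) *
          (∑' j : ℕ, ‖θ j‖ * Real.exp (-(α j) / (3 * p * k))) ^ k :=
  rhaly_topologizable_powerSeriesFinite_general α hα_mono hα_nonneg θ hθ p k hp hk n m
end

section
/- Let a be a Köthe matrix and θ ∈ K(a), and suppose inf_{n∈ℕ} a_{n,m₀} > 0 for some m₀ ∈ ℕ. Then the Rhaly operator R_θ : K(a) → K(a) is m-topologizable: for every p ∈ ℕ there exists C_p ≥ 1 such that for every k ≥ 1 and every x ∈ K(a), the iterate R_θ^k x belongs to K(a) and ∑_{n=1}^∞ |(R_θ^k x)_n| a_{n,p} ≤ C_p^k · ∑_{n=1}^∞ |x_n| a_{n,m₀}. (One may take C_p = max(D_p, D_{m₀}) with D_q = ‖θ‖_q / inf_n a_{n,m₀}, where ‖θ‖_q = ∑_n |θ_n|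 a_{n,q}.) -/
open scoped BigOperators

/-- If `θ ∈ K(a)` and `inf_n a_{n,m₀} > 0` for some `m₀`, then the Rhaly
operator `R_θ : K(a) → K(a)` is m-topologizable: for every `p` there is `C_p ≥ 1` with
`‖R_θ^k x‖_p ≤ C_p^k ‖x‖_{m₀}` for all `k ≥ 1` and `x ∈ K(a)`, and `R_θ^k x ∈ K(a)`. -/
theorem rhaly_mTopologizable_Kothe
    (a : ℕ → ℕ → ℝ)
    (ha_nonneg : ∀ n k, 0 ≤ a n k) (ha_mono : ∀ n k, a n k ≤ a n (k + 1))
    (ha_pos : ∀ n, ∃ k, 0 < a n k)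
    (θ : ℕ → ℂ)
    (hθ : ∀ k, Summable fun n => ‖θ n‖ * a n k)
    (m₀ : ℕ) (A : ℝ) (hA : 0 < A) (hAle : ∀ n, A ≤ a n m₀) :
    ∀ p : ℕ, ∃ C : ℝ, 1 ≤ C ∧
      ∀ k : ℕ, 1 ≤ k → ∀ x : ℕ → ℂ,
        (∀ l, Summable fun n => ‖x n‖ * a n l) →
        (∀ l, Summable fun n => ‖(rhaly θ)^[k] x n‖ * a n l) ∧
          ∑' n, ‖(rhaly θ)^[k] x n‖ * a n p ≤ C ^ k * ∑' n, ‖x n‖ * a n m₀ := by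
  intro p
  set Dp : ℝ := (∑' n, ‖θ n‖ * a n p) / A with hDpdef
  set Dm : ℝ := (∑' n, ‖θ n‖ * a n m₀) / A with hDmdef
  have hθnn : ∀ q, 0 ≤ ∑' n, ‖θ n‖ * a n q := fun q =>
    tsum_nonneg fun n => mul_nonneg (norm_nonneg _) (ha_nonneg _ _)
  have hDp0 : 0 ≤ Dp := div_nonneg (hθnn p) hA.le
  have hDm0 : 0 ≤ Dm := div_nonneg (hθnn m₀) hA.le
  set C : ℝ := max 1 (max Dp Dm) with hCdef
  have hC1 : 1 ≤ C := le_max_left _ _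
  have hDpC : Dp ≤ C := le_trans (le_max_left _ _) (le_max_right _ _)
  have hDmC : Dm ≤ C := le_trans (le_max_right _ _) (le_max_right _ _)
  -- one-step estimate
  have hstep : ∀ x : ℕ → ℂ, (∀ l, Summable fun n => ‖x n‖ * a n l) →
      (∀ l, Summable fun n => ‖rhaly θ x n‖ * a n l) ∧
      ∀ q, ∑' n, ‖rhaly θ x n‖ * a n q ≤
        ((∑' n, ‖θ n‖ * a n q) / A) * ∑' n, ‖x n‖ * a n m₀ := by
    intro x hx
    set M : ℝ := (∑' n, ‖x n‖ * a n m₀) / A with hMdef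
    have hxnn : 0 ≤ ∑' n, ‖x n‖ * a n m₀ :=
      tsum_nonneg fun n => mul_nonneg (norm_nonneg _) (ha_nonneg _ _)
    have hM0 : 0 ≤ M := div_nonneg hxnn hA.le
    have hbound : ∀ n, ‖rhaly θ x n‖ ≤ M * ‖θ n‖ := by
      intro n
      have h1 : ‖∑ j ∈ Finset.range (n + 1), x j‖ ≤ ∑ j ∈ Finset.range (n + 1), ‖x j‖ :=
        norm_sum_le _ _
      have h2 : (∑ j ∈ Finset.range (n + 1), ‖x j‖) * A ≤ ∑' m, ‖x m‖ * a m m₀ := by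
        calc (∑ j ∈ Finset.range (n + 1), ‖x j‖) * A
            = ∑ j ∈ Finset.range (n + 1), ‖x j‖ * A := by rw [Finset.sum_mul]
          _ ≤ ∑ j ∈ Finset.range (n + 1), ‖x j‖ * a j m₀ :=
              Finset.sum_le_sum fun j _ =>
                mul_le_mul_of_nonneg_left (hAle j) (norm_nonneg _)
          _ ≤ ∑' m, ‖x m‖ * a m m₀ :=
              Summable.sum_le_tsum _ (fun j _ => mul_nonneg (norm_nonneg _) (ha_nonneg _ _)) (hx m₀)
      have h3 : ∑ j ∈ Finset.range (n + 1), ‖x j‖ ≤ M := by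
        rw [hMdef, le_div_iff₀ hA]; exact h2
      calc ‖rhaly θ x n‖ = ‖∑ j ∈ Finset.range (n + 1), x j‖ * ‖θ n‖ := by
            rw [rhaly, norm_mul]
        _ ≤ M * ‖θ n‖ :=
            mul_le_mul_of_nonneg_right (le_trans h1 h3) (norm_nonneg _)
    have hsumm : ∀ l, Summable fun n => ‖rhaly θ x n‖ * a n l := by
      intro l
      refine Summable.of_nonneg_of_le
        (fun n => mul_nonneg (norm_nonneg _) (ha_nonneg _ _))
        (fun n => ?_) ((hθ l).mul_left M)
      calc ‖rhaly θ x n‖ * a n l ≤ (M * ‖θ n‖) * a n l :=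
            mul_le_mul_of_nonneg_right (hbound n) (ha_nonneg _ _)
        _ = M * (‖θ n‖ * a n l) := by ring
    refine ⟨hsumm, fun q => ?_⟩
    calc ∑' n, ‖rhaly θ x n‖ * a n q
        ≤ ∑' n, M * (‖θ n‖ * a n q) := by
          refine Summable.tsum_le_tsum (fun n => ?_) (hsumm q) ((hθ q).mul_left M)
          calc ‖rhaly θ x n‖ * a n q ≤ (M * ‖θ n‖) * a n q :=
                mul_le_mul_of_nonneg_right (hbound n) (ha_nonneg _ _)
            _ = M * (‖θ n‖ * a n q) := by ring
      _ = M * ∑' n, ‖θ n‖ * a n q := tsum_mul_left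
      _ = ((∑' n, ‖θ n‖ * a n q) / A) * ∑' n, ‖x n‖ * a n m₀ := by
          rw [hMdef]; ring
  refine ⟨C, hC1, ?_⟩
  intro k hk x hx
  have hxnn : 0 ≤ ∑' n, ‖x n‖ * a n m₀ :=
    tsum_nonneg fun n => mul_nonneg (norm_nonneg _) (ha_nonneg _ _)
  -- iterated estimate in the m₀ norm
  have H : ∀ j : ℕ, (∀ l, Summable fun n => ‖(rhaly θ)^[j] x n‖ * a n l) ∧
      ∑' n, ‖(rhaly θ)^[j] x n‖ * a n m₀ ≤ Dm ^ j * ∑' n, ‖x n‖ * a n m₀ := by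
    intro j
    induction j with
    | zero => exact ⟨by simpa using hx, by simp⟩
    | succ j ih =>
      have hs := hstep _ ih.1
      constructor
      · intro l
        have := hs.1 l
        simpa [Function.iterate_succ_apply'] using this
      · have h1 : ∑' n, ‖rhaly θ ((rhaly θ)^[j] x) n‖ * a n m₀ ≤
            Dm * ∑' n, ‖(rhaly θ)^[j] x n‖ * a n m₀ := hs.2 m₀
        have h2 : Dm * ∑' n, ‖(rhaly θ)^[j] x n‖ * a n m₀ ≤
            Dm * (Dm ^ j * ∑' n, ‖x n‖ * a n m₀) :=
          mul_le_mul_of_nonneg_left ih.2 hDm0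
        calc ∑' n, ‖(rhaly θ)^[j + 1] x n‖ * a n m₀
            = ∑' n, ‖rhaly θ ((rhaly θ)^[j] x) n‖ * a n m₀ := by
              simp [Function.iterate_succ_apply']
          _ ≤ Dm * (Dm ^ j * ∑' n, ‖x n‖ * a n m₀) := le_trans h1 h2
          _ = Dm ^ (j + 1) * ∑' n, ‖x n‖ * a n m₀ := by ring
  obtain ⟨j, rfl⟩ : ∃ j, k = j + 1 := ⟨k - 1, (Nat.succ_pred_eq_of_pos hk).symm⟩
  have hs := hstep _ (H j).1
  constructor
  · intro l
    have := hs.1 l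
    simpa [Function.iterate_succ_apply'] using this
  · have h1 : ∑' n, ‖rhaly θ ((rhaly θ)^[j] x) n‖ * a n p ≤
        Dp * ∑' n, ‖(rhaly θ)^[j] x n‖ * a n m₀ := hs.2 p
    have h2 : Dp * ∑' n, ‖(rhaly θ)^[j] x n‖ * a n m₀ ≤
        Dp * (Dm ^ j * ∑' n, ‖x n‖ * a n m₀) :=
      mul_le_mul_of_nonneg_left (H j).2 hDp0
    have h3 : Dp * (Dm ^ j * ∑' n, ‖x n‖ * a n m₀) ≤
        C * (C ^ j * ∑' n, ‖x n‖ * a n m₀) := by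
      have hpow : Dm ^ j ≤ C ^ j := pow_le_pow_left₀ hDm0 hDmC j
      have : Dm ^ j * ∑' n, ‖x n‖ * a n m₀ ≤ C ^ j * ∑' n, ‖x n‖ * a n m₀ :=
        mul_le_mul_of_nonneg_right hpow hxnn
      exact mul_le_mul hDpC this
        (mul_nonneg (pow_nonneg hDm0 j) hxnn) (le_trans zero_le_one hC1)
    calc ∑' n, ‖(rhaly θ)^[j + 1] x n‖ * a n p
        = ∑' n, ‖rhaly θ ((rhaly θ)^[j] x) n‖ * a n p := by
          simp [Function.iterate_succ_apply']
      _ ≤ C * (C ^ j * ∑' n, ‖x n‖ * a n m₀) := le_trans h1 (le_trans h2 h3)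
      _ = C ^ (j + 1) * ∑' n, ‖x n‖ * a n m₀ := by ring
end

section
/- Let α : ℕ → ℝ be nondecreasing with α_n ≥ 0 and α_n → ∞, and let θ ∈ Λ_∞(α). Then the Rhaly operator R_θ : Λ_∞(α) → Λ_∞(α) is m-topologizable: for every p ∈ ℕ there exists C_p ≥ 1 such that for every k ≥ 1 and every x ∈ Λ_∞(α), the iterate R_θ^k x belongs to Λ_∞(α) and ∑_{n=1}^∞ |(R_θ^k x)_n| e^{p α_n} ≤ C_p^k · ∑_{n=1}^∞ |x_n| e^{α_n}. -/
open scoped BigOperators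

lemma rhaly_step (α : ℕ → ℝ) (hα_nonneg : ∀ n, 0 ≤ α n) (θ y : ℕ → ℂ)
    (hθ : ∀ k : ℕ, Summable fun n => ‖θ n‖ * Real.exp (k * α n))
    (hy : ∀ l : ℕ, Summable fun n => ‖y n‖ * Real.exp (l * α n)) :
    (∀ l : ℕ, Summable fun n => ‖rhaly θ y n‖ * Real.exp (l * α n)) ∧
    ∀ l : ℕ, ∑' n, ‖rhaly θ y n‖ * Real.exp (l * α n)
      ≤ (∑' n, ‖θ n‖ * Real.exp (l * α n)) * ∑' n, ‖y n‖ * Real.exp (α n) := by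
  have hS : Summable fun n => ‖y n‖ * Real.exp (α n) := by simpa using hy 1
  set S := ∑' n, ‖y n‖ * Real.exp (α n) with hSdef
  have hSnn : 0 ≤ S := tsum_nonneg fun n => by positivity
  have hpt : ∀ (l : ℕ) (n : ℕ), ‖rhaly θ y n‖ * Real.exp (l * α n)
      ≤ S * (‖θ n‖ * Real.exp (l * α n)) := by
    intro l n
    have h1 : ‖rhaly θ y n‖ ≤ S * ‖θ n‖ := by
      have h2 : ‖∑ j ∈ Finset.range (n + 1), y j‖ ≤ S := by
        calc ‖∑ j ∈ Finset.range (n + 1), y j‖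
            ≤ ∑ j ∈ Finset.range (n + 1), ‖y j‖ := norm_sum_le _ _
          _ ≤ ∑ j ∈ Finset.range (n + 1), ‖y j‖ * Real.exp (α j) := by
              refine Finset.sum_le_sum fun j _ => ?_
              nlinarith [Real.one_le_exp (hα_nonneg j), norm_nonneg (y j)]
          _ ≤ S := Summable.sum_le_tsum _ (fun j _ => by positivity) hS
      calc ‖rhaly θ y n‖ = ‖∑ j ∈ Finset.range (n + 1), y j‖ * ‖θ n‖ := norm_mul _ _
        _ ≤ S * ‖θ n‖ := by
            exact mul_le_mul_of_nonneg_right h2 (norm_nonneg _)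
    calc ‖rhaly θ y n‖ * Real.exp (l * α n) ≤ S * ‖θ n‖ * Real.exp (l * α n) :=
          mul_le_mul_of_nonneg_right h1 (Real.exp_nonneg _)
      _ = S * (‖θ n‖ * Real.exp (l * α n)) := by ring
  have hsum : ∀ l : ℕ, Summable fun n => ‖rhaly θ y n‖ * Real.exp (l * α n) := by
    intro l
    exact Summable.of_nonneg_of_le (fun n => by positivity) (hpt l) ((hθ l).mul_left S)
  refine ⟨hsum, fun l => ?_⟩
  calc ∑' n, ‖rhaly θ y n‖ * Real.exp (l * α n)
      ≤ ∑' n, S * (‖θ n‖ * Real.exp (l * α n)) :=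
        Summable.tsum_le_tsum (hpt l) (hsum l) ((hθ l).mul_left S)
    _ = (∑' n, ‖θ n‖ * Real.exp (l * α n)) * S := by rw [tsum_mul_left, mul_comm]

/-- For every `θ ∈ Λ_∞(α)` the Rhaly operator
`R_θ : Λ_∞(α) → Λ_∞(α)` is m-topologizable: for every `p` there is `C_p ≥ 1` with
`‖R_θ^k x‖_p ≤ C_p^k ‖x‖_1` for all `k ≥ 1` and `x ∈ Λ_∞(α)`, and `R_θ^k x ∈ Λ_∞(α)`. -/
theorem rhaly_mTopologizable_powerSeriesInfinite
    (α : ℕ → ℝ) (hα_mono : Monotone α) (hα_nonneg : ∀ n, 0 ≤ α n)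
    (hα_top : Filter.Tendsto α Filter.atTop Filter.atTop)
    (θ : ℕ → ℂ)
    (hθ : ∀ k : ℕ, Summable fun n => ‖θ n‖ * Real.exp (k * α n)) :
    ∀ p : ℕ, ∃ C : ℝ, 1 ≤ C ∧
      ∀ k : ℕ, 1 ≤ k → ∀ x : ℕ → ℂ,
        (∀ l : ℕ, Summable fun n => ‖x n‖ * Real.exp (l * α n)) →
        (∀ l : ℕ, Summable fun n => ‖(rhaly θ)^[k] x n‖ * Real.exp (l * α n)) ∧
          ∑' n, ‖(rhaly θ)^[k] x n‖ * Real.exp (p * α n)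
            ≤ C ^ k * ∑' n, ‖x n‖ * Real.exp (α n) := by
  intro p
  set T1 : ℝ := ∑' n, ‖θ n‖ * Real.exp ((1 : ℕ) * α n) with hT1
  set Tp : ℝ := ∑' n, ‖θ n‖ * Real.exp (p * α n) with hTp
  refine ⟨max 1 (max T1 Tp), le_max_left _ _, ?_⟩
  set C : ℝ := max 1 (max T1 Tp) with hC
  have hC1 : (1 : ℝ) ≤ C := le_max_left _ _
  have hT1C : T1 ≤ C := le_trans (le_max_left _ _) (le_max_right _ _)
  have hTpC : Tp ≤ C := le_trans (le_max_right _ _) (le_max_right _ _)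
  intro k hk x hx
  set X : ℝ := ∑' n, ‖x n‖ * Real.exp (α n) with hX
  have hXnn : 0 ≤ X := tsum_nonneg fun n => by positivity
  -- main induction claim
  have claim : ∀ m : ℕ,
      (∀ l : ℕ, Summable fun n => ‖(rhaly θ)^[m] x n‖ * Real.exp (l * α n)) ∧
      ∑' n, ‖(rhaly θ)^[m] x n‖ * Real.exp (α n) ≤ C ^ m * X := by
    intro m
    induction m with
    | zero => simpa using ⟨hx, le_refl X⟩
    | succ m ih =>
      obtain ⟨ihsum, ihbd⟩ := ih
      obtain ⟨hsum, hbd⟩ := rhaly_step α hα_nonneg θ _ hθ ihsum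
      have hit : (rhaly θ)^[m + 1] x = rhaly θ ((rhaly θ)^[m] x) :=
        Function.iterate_succ_apply' _ _ _
      constructor
      · intro l; rw [hit]; exact hsum l
      · have hb1 := hbd 1
        have hynn : 0 ≤ ∑' n, ‖(rhaly θ)^[m] x n‖ * Real.exp (α n) :=
          tsum_nonneg fun n => by positivity
        rw [hit]
        calc ∑' n, ‖rhaly θ ((rhaly θ)^[m] x) n‖ * Real.exp (α n)
            = ∑' n, ‖rhaly θ ((rhaly θ)^[m] x) n‖ * Real.exp ((1:ℕ) * α n) := by
              simp
          _ ≤ T1 * ∑' n, ‖(rhaly θ)^[m] x n‖ * Real.exp (α n) := hb1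
          _ ≤ C * (C ^ m * X) := by
              refine mul_le_mul hT1C ihbd hynn (le_trans zero_le_one hC1)
          _ = C ^ (m + 1) * X := by ring
  obtain ⟨hsum, _⟩ := claim k
  refine ⟨hsum, ?_⟩
  obtain ⟨m, rfl⟩ : ∃ m, k = m + 1 := ⟨k - 1, (Nat.succ_pred_eq_of_pos hk).symm⟩
  obtain ⟨ihsum, ihbd⟩ := claim m
  obtain ⟨_, hbd⟩ := rhaly_step α hα_nonneg θ _ hθ ihsum
  have hit : (rhaly θ)^[m + 1] x = rhaly θ ((rhaly θ)^[m] x) :=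
    Function.iterate_succ_apply' _ _ _
  have hynn : 0 ≤ ∑' n, ‖(rhaly θ)^[m] x n‖ * Real.exp (α n) :=
    tsum_nonneg fun n => by positivity
  rw [hit]
  calc ∑' n, ‖rhaly θ ((rhaly θ)^[m] x) n‖ * Real.exp (p * α n)
      ≤ Tp * ∑' n, ‖(rhaly θ)^[m] x n‖ * Real.exp (α n) := hbd p
    _ ≤ C * (C ^ m * X) := mul_le_mul hTpC ihbd hynn (le_trans zero_le_one hC1)
    _ = C ^ (m + 1) * X := by ring
end

section
/- Let a be a Köthe matrix and θ ∈ K(a). Suppose A := inf_{n∈ℕ} a_{n,m₀} > 0 for some m₀ ∈ ℕ and that sup_{p∈ℕ} ∑_{n=1}^∞ |θ_n| a_{n,p} ≤ A. Then the Rhaly operator R_θ : K(a) → K(a) is power bounded: for every p ∈ ℕ, every k ≥ 1 and every x ∈ K(a), the iterate R_θ^k x belongs to K(a) and ∑_{n=1}^∞ |(R_θ^k x)_n| a_{n,p} ≤ ∑_{n=1}^∞ |x_n| a_{n,m₀}. -/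
open scoped BigOperators

lemma rhaly_step_s17 (a : ℕ → ℕ → ℝ) (ha_nonneg : ∀ n k, 0 ≤ a n k)
    (θ : ℕ → ℂ) (hθ : ∀ k, Summable fun n => ‖θ n‖ * a n k)
    (m₀ : ℕ) (A : ℝ) (hA : 0 < A) (hAle : ∀ n, A ≤ a n m₀)
    (hθA : ∀ p : ℕ, ∑' n, ‖θ n‖ * a n p ≤ A)
    (x : ℕ → ℂ) (hx : ∀ l, Summable fun n => ‖x n‖ * a n l) :
    ∀ p : ℕ, Summable (fun n => ‖rhaly θ x n‖ * a n p) ∧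
      ∑' n, ‖rhaly θ x n‖ * a n p ≤ ∑' n, ‖x n‖ * a n m₀ := by
  have hxs : Summable fun n => ‖x n‖ := by
    apply Summable.of_nonneg_of_le (fun n => norm_nonneg _)
      (fun n => ?_) ((hx m₀).mul_left (1/A))
    have h1 : ‖x n‖ * A ≤ ‖x n‖ * a n m₀ :=
      mul_le_mul_of_nonneg_left (hAle n) (norm_nonneg _)
    rw [one_div, mul_comm, ← div_eq_mul_inv, le_div_iff₀ hA]
    linarith [h1]
  set S : ℝ := ∑' n, ‖x n‖ with hS
  have hSn : 0 ≤ S := tsum_nonneg fun n => norm_nonneg _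
  intro p
  have bound : ∀ n, ‖rhaly θ x n‖ * a n p ≤ S * (‖θ n‖ * a n p) := by
    intro n
    have h1 : ‖rhaly θ x n‖ ≤ S * ‖θ n‖ := by
      rw [rhaly, norm_mul]
      apply mul_le_mul_of_nonneg_right _ (norm_nonneg _)
      calc ‖∑ j ∈ Finset.range (n + 1), x j‖
          ≤ ∑ j ∈ Finset.range (n + 1), ‖x j‖ := norm_sum_le _ _
        _ ≤ S := Summable.sum_le_tsum _ (fun j _ => norm_nonneg _) hxs
    calc ‖rhaly θ x n‖ * a n p ≤ S * ‖θ n‖ * a n p :=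
          mul_le_mul_of_nonneg_right h1 (ha_nonneg n p)
      _ = S * (‖θ n‖ * a n p) := by ring
  have hsum : Summable (fun n => ‖rhaly θ x n‖ * a n p) :=
    Summable.of_nonneg_of_le
      (fun n => mul_nonneg (norm_nonneg _) (ha_nonneg n p)) bound
      ((hθ p).mul_left S)
  refine ⟨hsum, ?_⟩
  calc ∑' n, ‖rhaly θ x n‖ * a n p
      ≤ ∑' n, S * (‖θ n‖ * a n p) :=
        Summable.tsum_le_tsum bound hsum ((hθ p).mul_left S)
    _ = S * ∑' n, ‖θ n‖ * a n p := tsum_mul_left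
    _ ≤ S * A := mul_le_mul_of_nonneg_left (hθA p) hSn
    _ = ∑' n, ‖x n‖ * A := (tsum_mul_right).symm
    _ ≤ ∑' n, ‖x n‖ * a n m₀ := by
        apply Summable.tsum_le_tsum (fun n =>
          mul_le_mul_of_nonneg_left (hAle n) (norm_nonneg _))
          (hxs.mul_right A) (hx m₀)

/-- If `θ ∈ K(a)`, `A = inf_n a_{n,m₀} > 0` for some `m₀` and
`sup_p ‖θ‖_p ≤ A`, then `R_θ : K(a) → K(a)` is power bounded:
`‖R_θ^k x‖_p ≤ ‖x‖_{m₀}` for every `p`, every `k ≥ 1` and every `x ∈ K(a)`. -/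
theorem rhaly_powerBounded_Kothe
    (a : ℕ → ℕ → ℝ)
    (ha_nonneg : ∀ n k, 0 ≤ a n k) (ha_mono : ∀ n k, a n k ≤ a n (k + 1))
    (ha_pos : ∀ n, ∃ k, 0 < a n k)
    (θ : ℕ → ℂ)
    (hθ : ∀ k, Summable fun n => ‖θ n‖ * a n k)
    (m₀ : ℕ) (A : ℝ) (hA : 0 < A) (hAle : ∀ n, A ≤ a n m₀)
    (hθA : ∀ p : ℕ, ∑' n, ‖θ n‖ * a n p ≤ A) :
    ∀ p : ℕ, ∀ k : ℕ, 1 ≤ k → ∀ x : ℕ → ℂ,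
      (∀ l, Summable fun n => ‖x n‖ * a n l) →
      (∀ l, Summable fun n => ‖(rhaly θ)^[k] x n‖ * a n l) ∧
        ∑' n, ‖(rhaly θ)^[k] x n‖ * a n p ≤ ∑' n, ‖x n‖ * a n m₀ := by
  have key : ∀ j : ℕ, ∀ x : ℕ → ℂ,
      (∀ l, Summable fun n => ‖x n‖ * a n l) →
      (∀ l, Summable fun n => ‖(rhaly θ)^[j+1] x n‖ * a n l) ∧
        ∀ p : ℕ, ∑' n, ‖(rhaly θ)^[j+1] x n‖ * a n p ≤ ∑' n, ‖x n‖ * a n m₀ := by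
    intro j
    induction j with
    | zero =>
      intro x hx
      rw [show (0:ℕ)+1 = 1 from rfl, Function.iterate_one]
      exact ⟨fun l => (rhaly_step_s17 a ha_nonneg θ hθ m₀ A hA hAle hθA x hx l).1,
        fun p => (rhaly_step_s17 a ha_nonneg θ hθ m₀ A hA hAle hθA x hx p).2⟩
    | succ j ih =>
      intro x hx
      obtain ⟨hy, hyb⟩ := ih x hx
      have hiter : (rhaly θ)^[j+1+1] x = rhaly θ ((rhaly θ)^[j+1] x) :=
        Function.iterate_succ_apply' _ _ _
      rw [hiter]
      have step := rhaly_step_s17 a ha_nonneg θ hθ m₀ A hA hAle hθA _ hy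
      exact ⟨fun l => (step l).1, fun p => le_trans (step p).2 (hyb m₀)⟩
  intro p k hk x hx
  obtain ⟨j, rfl⟩ : ∃ j, k = j + 1 := ⟨k - 1, (Nat.succ_pred_eq_of_pos hk).symm⟩
  obtain ⟨h1, h2⟩ := key j x hx
  exact ⟨h1, h2 p⟩
end

section
/- Let α : ℕ → ℝ be nondecreasing with α_n ≥ 0 and α_n → ∞, and let θ : ℕ → ℂ satisfy ∑_{n=1}^∞ |θ_n| e^{−α_n/p} ≤ 1 for every p ∈ ℕ. Then the Rhaly operator R_θ is power bounded on Λ_1(α) with respect to the sup-seminorms: for every p ∈ ℕ, every k ≥ 1 and every n ∈ ℕ, sup_{m} |(R_θ^k e_n)_m| · e^{−α_m/p} ≤ e^{−α_n/(3p)}, i.e. ‖R_θ^k e_n‖_p ≤ ‖e_n‖_{3p} where ‖x‖_q = sup_m |x_m| e^{−α_m/q}. -/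
/-!
With `S_m = ∑_{j ≤ m} |θ_j|`, each application of `R_θ` multiplies partial `ℓ¹`-sums up to `m`
by at most `S_m`, so the entries of `R_θ^k e_n` up to `m` are bounded by `S_m^k`. Since `α` is
nondecreasing, `S_m e^{-α_m/q} ≤ ∑_{j ≤ m} |θ_j| e^{-α_j/q} ≤ 1` for every `q`; taking `q = 3pk`
bounds the `m`-th entry by `e^{α_m/(3p)}` (for `k = 0` this is `α ≥ 0`). That entry vanishes
for `m < n`, and for `m ≥ n` the weight `e^{-α_m/p}` absorbs it.
-/

open scoped BigOperators

open Finset Real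

noncomputable def partialNormSum (x : ℕ → ℂ) (m : ℕ) : ℝ :=
  ∑ j ∈ range (m + 1), ‖x j‖

lemma norm_le_partialNormSum (x : ℕ → ℂ) (m : ℕ) : ‖x m‖ ≤ partialNormSum x m :=
  single_le_sum (fun j _ => norm_nonneg (x j)) (self_mem_range_succ m)

lemma partialNormSum_nonneg (x : ℕ → ℂ) (m : ℕ) : 0 ≤ partialNormSum x m :=
  sum_nonneg fun j _ => norm_nonneg (x j)

lemma partialNormSum_mono (x : ℕ → ℂ) : Monotone (partialNormSum x) := fun _ _ h =>
  sum_le_sum_of_subset_of_nonneg (range_subset_range.mpr (by omega))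
    fun j _ _ => norm_nonneg (x j)

lemma partialNormSum_unitSeq_le_one (n m : ℕ) : partialNormSum (unitSeq n) m ≤ 1 := by
  simp only [partialNormSum, unitSeq, apply_ite norm, norm_one, norm_zero, sum_ite_eq']
  split_ifs <;> norm_num

lemma iterate_rhaly_eq_zero_of_lt (θ : ℕ → ℂ) {x : ℕ → ℂ} {n : ℕ} (hx : ∀ j < n, x j = 0)
    (k : ℕ) {m : ℕ} (hm : m < n) : (rhaly θ)^[k] x m = 0 := by
  induction k generalizing m with
  | zero => exact hx m hm
  | succ k ih =>
    rw [Function.iterate_succ_apply', rhaly, sum_eq_zero fun j hj => ih ?_, zero_mul]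
    exact (mem_range_succ_iff.mp hj).trans_lt hm

lemma partialNormSum_rhaly_le (θ x : ℕ → ℂ) (m : ℕ) :
    partialNormSum (rhaly θ x) m ≤ ∑ j ∈ range (m + 1), ‖θ j‖ * partialNormSum x j := by
  refine sum_le_sum fun j _ => ?_
  rw [rhaly, norm_mul, mul_comm]
  exact mul_le_mul_of_nonneg_left (norm_sum_le _ _) (norm_nonneg _)

lemma partialNormSum_iterate_rhaly_le (θ : ℕ → ℂ) {x : ℕ → ℂ}
    (hx : ∀ m, partialNormSum x m ≤ 1) (k m : ℕ) :
    partialNormSum ((rhaly θ)^[k] x) m ≤ partialNormSum θ m ^ k := by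
  induction k generalizing m with
  | zero => simpa using hx m
  | succ k ih =>
    rw [Function.iterate_succ_apply']
    calc partialNormSum (rhaly θ ((rhaly θ)^[k] x)) m
        ≤ ∑ j ∈ range (m + 1), ‖θ j‖ * partialNormSum ((rhaly θ)^[k] x) j :=
          partialNormSum_rhaly_le θ _ m
      _ ≤ ∑ j ∈ range (m + 1), ‖θ j‖ * partialNormSum θ m ^ k := by
          refine sum_le_sum fun j hj => mul_le_mul_of_nonneg_left ?_ (norm_nonneg _)
          exact (ih j).trans (pow_le_pow_left₀ (partialNormSum_nonneg θ j)
            (partialNormSum_mono θ (mem_range_succ_iff.mp hj)) k)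
      _ = partialNormSum θ m ^ (k + 1) := by rw [← sum_mul, pow_succ']; rfl

lemma partialNormSum_le_exp {α : ℕ → ℝ} (hα : Monotone α) {θ : ℕ → ℂ} {q : ℝ} (hq : 0 ≤ q)
    (hsum : Summable fun n => ‖θ n‖ * exp (-(α n) / q))
    (hle : ∑' n, ‖θ n‖ * exp (-(α n) / q) ≤ 1) (m : ℕ) :
    partialNormSum θ m ≤ exp (α m / q) :=
  calc partialNormSum θ m
      ≤ ∑ j ∈ range (m + 1), ‖θ j‖ * exp (-(α j) / q) * exp (α m / q) := by
        refine sum_le_sum fun j hj => ?_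
        rw [mul_assoc, ← exp_add, ← add_div, neg_add_eq_sub]
        refine le_mul_of_one_le_right (norm_nonneg _) (one_le_exp (div_nonneg ?_ hq))
        exact sub_nonneg.mpr (hα (mem_range_succ_iff.mp hj))
    _ = (∑ j ∈ range (m + 1), ‖θ j‖ * exp (-(α j) / q)) * exp (α m / q) := by rw [sum_mul]
    _ ≤ exp (α m / q) := by
        refine mul_le_of_le_one_left (exp_nonneg _) (le_trans ?_ hle)
        exact hsum.sum_le_tsum _ fun j _ => by positivity

lemma partialNormSum_pow_le_exp {α : ℕ → ℝ} (hα_mono : Monotone α) (hα_nonneg : ∀ n, 0 ≤ α n)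
    {θ : ℕ → ℂ} (hθsum : ∀ p : ℕ, 0 < p → Summable fun n => ‖θ n‖ * exp (-(α n) / p))
    (hθ : ∀ p : ℕ, 0 < p → ∑' n : ℕ, ‖θ n‖ * exp (-(α n) / p) ≤ 1)
    {q : ℕ} (hq : 0 < q) (k m : ℕ) :
    partialNormSum θ m ^ k ≤ exp (α m / q) := by
  rcases Nat.eq_zero_or_pos k with rfl | hk
  · exact (pow_zero _).trans_le (one_le_exp (div_nonneg (hα_nonneg m) q.cast_nonneg))
  have hqk : 0 < q * k := Nat.mul_pos hq hk
  calc partialNormSum θ m ^ k ≤ exp (α m / (q * k : ℕ)) ^ k :=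
        pow_le_pow_left₀ (partialNormSum_nonneg θ m)
          (partialNormSum_le_exp hα_mono (Nat.cast_nonneg _) (hθsum _ hqk) (hθ _ hqk) m) k
    _ = exp (α m / q) := by
        rw [← exp_nat_mul]
        congr 1
        push_cast
        field_simp

theorem rhaly_powerBounded_powerSeriesFinite_general
    (α : ℕ → ℝ) (hα_mono : Monotone α) (hα_nonneg : ∀ n, 0 ≤ α n)
    (θ : ℕ → ℂ)
    (hθsum : ∀ p : ℕ, 0 < p → Summable fun n => ‖θ n‖ * Real.exp (-(α n) / p))
    (hθ : ∀ p : ℕ, 0 < p → ∑' n : ℕ, ‖θ n‖ * Real.exp (-(α n) / p) ≤ 1)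
    (p k : ℕ) (hp : 0 < p) (n m : ℕ) :
    ‖(rhaly θ)^[k] (unitSeq n) m‖ * Real.exp (-(α m) / p)
      ≤ Real.exp (-(α n) / (3 * p)) := by
  rcases lt_or_ge m n with hmn | hnm
  · have hsupp : ∀ j < n, unitSeq n j = 0 := fun j hj => if_neg hj.ne
    rw [iterate_rhaly_eq_zero_of_lt θ hsupp k hmn, norm_zero, zero_mul]
    exact (exp_pos _).le
  have hentry : ‖(rhaly θ)^[k] (unitSeq n) m‖ ≤ exp (α m / (3 * p)) := by
    have h := partialNormSum_pow_le_exp hα_mono hα_nonneg hθsum hθ (Nat.mul_pos three_pos hp) k m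
    push_cast at h
    exact (norm_le_partialNormSum _ m).trans
      ((partialNormSum_iterate_rhaly_le θ (partialNormSum_unitSeq_le_one n) k m).trans h)
  calc ‖(rhaly θ)^[k] (unitSeq n) m‖ * exp (-(α m) / p)
      ≤ exp (α m / (3 * p)) * exp (-(α m) / p) := by gcongr
    _ = exp (-(2 * α m) / (3 * p)) := by rw [← exp_add]; congr 1; field_simp; ring
    _ ≤ exp (-(α n) / (3 * p)) := by
        gcongr
        linarith [hα_mono hnm, hα_nonneg m]

/-- If `‖θ‖_p = ∑_n |θ_n| e^{-α_n/p} ≤ 1` for every `p`, then `R_θ` is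
power bounded on `Λ_1(α)` with respect to the sup-seminorms:
`sup_m |(R_θ^k e_n)_m| e^{-α_m/p} ≤ e^{-α_n/(3p)}`, i.e. `‖R_θ^k e_n‖_p ≤ ‖e_n‖_{3p}`. -/
theorem rhaly_powerBounded_powerSeriesFinite
    (α : ℕ → ℝ) (hα_mono : Monotone α) (hα_nonneg : ∀ n, 0 ≤ α n)
    (hα_top : Filter.Tendsto α Filter.atTop Filter.atTop)
    (θ : ℕ → ℂ)
    (hθsum : ∀ p : ℕ, 0 < p → Summable fun n => ‖θ n‖ * Real.exp (-(α n) / p))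
    (hθ : ∀ p : ℕ, 0 < p → ∑' n : ℕ, ‖θ n‖ * Real.exp (-(α n) / p) ≤ 1)
    (p k : ℕ) (hp : 0 < p) (hk : 1 ≤ k) (n m : ℕ) :
    ‖(rhaly θ)^[k] (unitSeq n) m‖ * Real.exp (-(α m) / p)
      ≤ Real.exp (-(α n) / (3 * p)) :=
  rhaly_powerBounded_powerSeriesFinite_general α hα_mono hα_nonneg θ hθsum hθ p k hp n m
end

section
/- Let α : ℕ → ℝ be nondecreasing with α_n ≥ 0 and α_n → ∞, and let θ ∈ Λ_1(α). Suppose the Rhaly operator R_θ is power bounded on Λ_1(α), in the sense that there is a function q : ℕ → ℕ such that for every p ∈ ℕ, every k ≥ 1 and every n ∈ ℕ, ∑_{m=1}^∞ |(R_θ^k e_n)_m| e^{−α_m/p} ≤ e^{−α_n/q(p)}. Then ∑_{n=1}^∞ |θ_n| e^{−α_n/p} ≤ 1 for every p ∈ ℕ, i.e. sup_{p∈ℕ} ‖θ‖_p ≤ 1. The same conclusion holds if instead R_θ is merely Cesàro bounded, i.e. there is q : ℕ → ℕ such that for every p, every k ≥ 1 and every n, ∑_{m=1}^∞ |((1/k)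 ∑_{i=1}^k R_θ^i e_n)_m| e^{−α_m/p} ≤ e^{−α_n/q(p)}. -/
open scoped BigOperators

lemma rhaly_unitSeq_zero (θ : ℕ → ℂ) : rhaly θ (unitSeq 0) = θ := by
  funext m
  simp [rhaly, unitSeq, Finset.sum_ite_eq', Nat.zero_lt_succ]

lemma exp_le_one_aux (α : ℕ → ℝ) (hα_nonneg : ∀ n, 0 ≤ α n) (q : ℕ) :
    Real.exp (-(α 0) / q) ≤ 1 := by
  rw [Real.exp_le_one_iff]
  apply div_nonpos_of_nonpos_of_nonneg
  · linarith [hα_nonneg 0]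
  · positivity

/-- For `θ ∈ Λ_1(α)`, if the Rhaly operator `R_θ` is power bounded on
`Λ_1(α)` then `sup_p ‖θ‖_p ≤ 1`; the same conclusion holds if `R_θ` is merely Cesàro
bounded. -/
theorem rhaly_powerBounded_necessary_powerSeriesFinite
    (α : ℕ → ℝ) (hα_mono : Monotone α) (hα_nonneg : ∀ n, 0 ≤ α n)
    (hα_top : Filter.Tendsto α Filter.atTop Filter.atTop)
    (θ : ℕ → ℂ)
    (hθ : ∀ p : ℕ, 0 < p → Summable fun n => ‖θ n‖ * Real.exp (-(α n) / p)) :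
    ((∃ q : ℕ → ℕ, ∀ p : ℕ, 0 < p → 0 < q p ∧
        ∀ k : ℕ, 1 ≤ k → ∀ n : ℕ,
          ∑' m : ℕ, ‖(rhaly θ)^[k] (unitSeq n) m‖ * Real.exp (-(α m) / p)
            ≤ Real.exp (-(α n) / (q p))) →
      ∀ p : ℕ, 0 < p → ∑' n : ℕ, ‖θ n‖ * Real.exp (-(α n) / p) ≤ 1) ∧
    ((∃ q : ℕ → ℕ, ∀ p : ℕ, 0 < p → 0 < q p ∧
        ∀ k : ℕ, 1 ≤ k → ∀ n : ℕ,
          ∑' m : ℕ, ‖(k : ℂ)⁻¹ * ∑ i ∈ Finset.Icc 1 k, (rhaly θ)^[i] (unitSeq n) m‖ *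
              Real.exp (-(α m) / p)
            ≤ Real.exp (-(α n) / (q p))) →
      ∀ p : ℕ, 0 < p → ∑' n : ℕ, ‖θ n‖ * Real.exp (-(α n) / p) ≤ 1) := by
  constructor
  · rintro ⟨q, hq⟩ p hp
    have h := (hq p hp).2 1 le_rfl 0
    rw [Function.iterate_one, rhaly_unitSeq_zero] at h
    exact h.trans (exp_le_one_aux α hα_nonneg (q p))
  · rintro ⟨q, hq⟩ p hp
    have h := (hq p hp).2 1 le_rfl 0
    simp only [Finset.Icc_self, Finset.sum_singleton, Function.iterate_one,
      rhaly_unitSeq_zero, Nat.cast_one, inv_one, one_mul] at h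
    exact h.trans (exp_le_one_aux α hα_nonneg (q p))
end
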